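/- arXiv:2101.07413 — 11 statements merged into one kernel-verified Lean document; each statement's English description precedes it below -/
import Mathlib

section
/- Let E = EuclideanSpace ℝ (Fin D), let f : E → ℝ be differentiable, M-smooth, and satisfy the PL condition with constant μ > 0 and infimum f*. Let θ, v ∈ E, let 0 < η ≤ 2/M, and set θ' = θ − η(∇f(θ) + v). Then f(θ') − f* ≤ (1 − 2μη(1 − Mη/2))(f(θ) − f*) − (1 − Mη)·η·⟪∇f(θ), v⟫ + (M/2)·η²·‖v‖². -/
open scoped RealInnerProductSpace

/-- **One-step descent inequality for a perturbed gradient step.**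
If `f` is differentiable, `M`-smooth and satisfies the PL condition with constant `μ > 0`
and infimum `fstar`, then for the perturbed gradient step
`θ' = θ - η • (∇f(θ) + v)` with `0 < η ≤ 2/M`,
`f θ' - fstar ≤ (1 - 2μη(1 - Mη/2)) (f θ - fstar) - (1 - Mη) η ⟪∇f(θ), v⟫ + (M/2) η² ‖v‖²`. -/
theorem perturbed_gradient_step_descent
    (D : ℕ) (f : EuclideanSpace ℝ (Fin D) → ℝ) (M μ fstar : ℝ)
    (hdiff : Differentiable ℝ f) (hM : 0 < M)
    (hsmooth : ∀ x y : EuclideanSpace ℝ (Fin D),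
      f y ≤ f x + ⟪gradient f x, y - x⟫ + M / 2 * ‖y - x‖ ^ 2)
    (hμ : 0 < μ)
    (hfstar : IsGLB (Set.range f) fstar)
    (hPL : ∀ θ : EuclideanSpace ℝ (Fin D), ‖gradient f θ‖ ^ 2 ≥ 2 * μ * (f θ - fstar))
    (θ v : EuclideanSpace ℝ (Fin D)) (η : ℝ) (hη : 0 < η) (hη2 : η ≤ 2 / M) :
    f (θ - η • (gradient f θ + v)) - fstar ≤
      (1 - 2 * μ * η * (1 - M * η / 2)) * (f θ - fstar)
        - (1 - M * η) * η * ⟪gradient f θ, v⟫ + M / 2 * η ^ 2 * ‖v‖ ^ 2 := by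
  set g := gradient f θ with hg
  have key := hsmooth θ (θ - η • (g + v))
  have hy : θ - η • (g + v) - θ = -(η • (g + v)) := by abel
  rw [hy] at key
  have hinner : ⟪g, -(η • (g + v))⟫ = -(η * ‖g‖ ^ 2) - η * ⟪g, v⟫ := by
    rw [inner_neg_right, real_inner_smul_right, inner_add_right, real_inner_self_eq_norm_sq]
    ring
  have hnorm : ‖-(η • (g + v))‖ ^ 2 = η ^ 2 * (‖g‖ ^ 2 + 2 * ⟪g, v⟫ + ‖v‖ ^ 2) := by
    rw [norm_neg, norm_smul, mul_pow, ← norm_add_sq_real, Real.norm_eq_abs, sq_abs]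
  rw [hinner, hnorm] at key
  have hcoef : 0 ≤ η * (1 - M * η / 2) := by
    have h2 : M * η ≤ 2 := by
      have := (le_div_iff₀ hM).mp hη2
      linarith
    nlinarith
  have hPLθ := hPL θ
  have hfθ : fstar ≤ f θ := hfstar.1 ⟨θ, rfl⟩
  nlinarith [mul_le_mul_of_nonneg_left hPLθ hcoef]
end

section
/- Let E = EuclideanSpace ℝ (Fin D), let f : E → ℝ be differentiable, M-smooth, and satisfy the PL condition with constant μ > 0, with 0 < μ ≤ M, infimum f*, and set γ = 1 − μ/M. Let G, N > 0, let σ_1, …, σ_T > 0, and on a probability space let ν_1, …, ν_T : Ω → E be random vectors such that for each t, ν_t has mean zero, E‖ν_t‖² ≤ D, and ν_t is independent of (ν_1, …, ν_{t−1}). Define random iterates by θ_1 ∈ E deterministic and θ_{t+1} = θ_t − (1/M)(∇f(θ_t) + (G σ_t / N) ν_t). Then E[f(θ_{T+1})] − f* ≤ γ^T (f(θ_1) − f*) + (D G² / (2 M N²)) ∑_{t=1}^T γ^{T−t} σ_t². -/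
open scoped RealInnerProductSpace
open MeasureTheory ProbabilityTheory Finset

/-! With step size `1/M`, the smoothness bound applied along the noisy step
`-(1/M)(∇f(θ) + w)` gives `f(θ⁺) ≤ f(θ) - ‖∇f(θ)‖²/(2M) + ‖w‖²/(2M)`: the cross terms
`⟪∇f(θ), w⟫` of the linear and the quadratic part cancel exactly. The PL inequality turns the
gradient term into a contraction of the excess risk by `γ = 1 - μ/M`; taking expectations
bounds the noise term by `D (Gσ_t/N)²/(2M)`, and unrolling the recursion
`a_{t+1} ≤ γ a_t + b_t` gives the claim. -/

section GradientStep

variable {E : Type*} [NormedAddCommGroup E] [InnerProductSpace ℝ E] [CompleteSpace E]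
  {f : E → ℝ} {M : ℝ}

theorem le_of_perturbed_gradient_step (hM : 0 < M)
    (hsmooth : ∀ x y : E, f y ≤ f x + ⟪gradient f x, y - x⟫ + M / 2 * ‖y - x‖ ^ 2) (x w : E) :
    f (x - (1 / M) • (gradient f x + w))
      ≤ f x - ‖gradient f x‖ ^ 2 / (2 * M) + ‖w‖ ^ 2 / (2 * M) := by
  set g := gradient f x
  have hinner : ⟪g, x - (1 / M) • (g + w) - x⟫ = -(1 / M) * (‖g‖ ^ 2 + ⟪g, w⟫) := by
    rw [sub_sub_cancel_left, inner_neg_right, real_inner_smul_right, inner_add_right,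
      real_inner_self_eq_norm_sq]
    ring
  have hnorm : ‖x - (1 / M) • (g + w) - x‖ ^ 2
      = (1 / M) ^ 2 * (‖g‖ ^ 2 + 2 * ⟪g, w⟫ + ‖w‖ ^ 2) := by
    rw [sub_sub_cancel_left, norm_neg, norm_smul, mul_pow, norm_add_sq_real, Real.norm_eq_abs,
      sq_abs]
  calc f (x - (1 / M) • (g + w))
      ≤ f x + ⟪g, x - (1 / M) • (g + w) - x⟫ + M / 2 * ‖x - (1 / M) • (g + w) - x‖ ^ 2 :=
        hsmooth _ _
    _ = f x - ‖g‖ ^ 2 / (2 * M) + ‖w‖ ^ 2 / (2 * M) := by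
        rw [hinner, hnorm]
        field_simp
        ring

theorem excess_le_of_perturbed_gradient_step {μ fstar : ℝ} (hM : 0 < M)
    (hsmooth : ∀ x y : E, f y ≤ f x + ⟪gradient f x, y - x⟫ + M / 2 * ‖y - x‖ ^ 2)
    (hPL : ∀ θ : E, ‖gradient f θ‖ ^ 2 ≥ 2 * μ * (f θ - fstar)) (x w : E) :
    f (x - (1 / M) • (gradient f x + w)) - fstar
      ≤ (1 - μ / M) * (f x - fstar) + ‖w‖ ^ 2 / (2 * M) := by
  have hdescent := le_of_perturbed_gradient_step hM hsmooth x w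
  have hgrad : μ / M * (f x - fstar) ≤ ‖gradient f x‖ ^ 2 / (2 * M) := by
    calc μ / M * (f x - fstar) = 2 * μ * (f x - fstar) / (2 * M) := by field_simp
      _ ≤ ‖gradient f x‖ ^ 2 / (2 * M) := by gcongr; exact hPL x
  linarith

end GradientStep

theorem integral_sub_le_of_forall_sub_le {Ω : Type*} [MeasurableSpace Ω] {P : Measure Ω}
    [IsProbabilityMeasure P] {X Y Z : Ω → ℝ} {γ κ c : ℝ}
    (hX : Integrable X P) (hY : Integrable Y P) (hZ : Integrable Z P)
    (h : ∀ ω, Y ω - c ≤ γ * (X ω - c) + κ * Z ω) :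
    (∫ ω, Y ω ∂P) - c ≤ γ * ((∫ ω, X ω ∂P) - c) + κ * ∫ ω, Z ω ∂P := by
  have hXc : Integrable (fun ω => γ * (X ω - c)) P := (hX.sub (integrable_const c)).const_mul γ
  calc (∫ ω, Y ω ∂P) - c = ∫ ω, Y ω - c ∂P := by
        rw [integral_sub hY (integrable_const c), integral_const, probReal_univ, one_smul]
    _ ≤ ∫ ω, γ * (X ω - c) + κ * Z ω ∂P :=
        integral_mono (hY.sub (integrable_const c)) (hXc.add (hZ.const_mul κ)) h
    _ = γ * ((∫ ω, X ω ∂P) - c) + κ * ∫ ω, Z ω ∂P := by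
        rw [integral_add hXc (hZ.const_mul κ), integral_const_mul, integral_const_mul,
          integral_sub hX (integrable_const c), integral_const, probReal_univ, one_smul]

theorem le_geom_sum_of_le_mul_add {a b : ℕ → ℝ} {γ : ℝ} (hγ : 0 ≤ γ)
    (h : ∀ t, 1 ≤ t → a (t + 1) ≤ γ * a t + b t) (n : ℕ) :
    a (n + 1) ≤ γ ^ n * a 1 + ∑ t ∈ Icc 1 n, γ ^ (n - t) * b t := by
  induction n with
  | zero => simp
  | succ n ih =>
    have hsum : ∑ t ∈ Icc 1 (n + 1), γ ^ (n + 1 - t) * b t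
        = γ * ∑ t ∈ Icc 1 n, γ ^ (n - t) * b t + b (n + 1) := by
      rw [sum_Icc_succ_top (by omega), mul_sum, Nat.sub_self, pow_zero, one_mul]
      congr 1
      refine sum_congr rfl fun t ht => ?_
      rw [Nat.sub_add_comm (mem_Icc.mp ht).2, pow_succ]
      ring
    calc a (n + 1 + 1) ≤ γ * a (n + 1) + b (n + 1) := h (n + 1) (by omega)
      _ ≤ γ * (γ ^ n * a 1 + ∑ t ∈ Icc 1 n, γ ^ (n - t) * b t) + b (n + 1) := by gcongr
      _ = γ ^ (n + 1) * a 1 + ∑ t ∈ Icc 1 (n + 1), γ ^ (n + 1 - t) * b t := by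
        rw [hsum, pow_succ]
        ring

theorem private_gradient_descent_excess_risk_general
    (D T : ℕ)
    (f : EuclideanSpace ℝ (Fin D) → ℝ) (M μ fstar G N : ℝ)
    (hM : 0 < M) (hμM : μ ≤ M)
    (hsmooth : ∀ x y : EuclideanSpace ℝ (Fin D),
      f y ≤ f x + ⟪gradient f x, y - x⟫ + M / 2 * ‖y - x‖ ^ 2)
    (hPL : ∀ θ : EuclideanSpace ℝ (Fin D), ‖gradient f θ‖ ^ 2 ≥ 2 * μ * (f θ - fstar))
    (σ : ℕ → ℝ)
    (Ω : Type) [MeasureSpace Ω] [IsProbabilityMeasure (volume : Measure Ω)]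
    (ν : ℕ → Ω → EuclideanSpace ℝ (Fin D))
    (hmoment2int : ∀ t, Integrable (fun ω => ‖ν t ω‖ ^ 2))
    (hmoment2 : ∀ t, ∫ ω, ‖ν t ω‖ ^ 2 ≤ (D : ℝ))
    (θ₁ : EuclideanSpace ℝ (Fin D))
    (θ : ℕ → Ω → EuclideanSpace ℝ (Fin D))
    (hθ₁ : ∀ ω, θ 1 ω = θ₁)
    (hiter : ∀ t ω, 1 ≤ t →
      θ (t + 1) ω = θ t ω - (1 / M) • (gradient f (θ t ω) + (G * σ t / N) • ν t ω))
    (hfint : ∀ t, Integrable (fun ω => f (θ t ω))) :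
    (∫ ω, f (θ (T + 1) ω)) - fstar ≤
      (1 - μ / M) ^ T * (f θ₁ - fstar)
        + ((D : ℝ) * G ^ 2 / (2 * M * N ^ 2)) * ∑ t ∈ Icc 1 T, (1 - μ / M) ^ (T - t) * σ t ^ 2 := by
  have hγ : 0 ≤ 1 - μ / M := sub_nonneg.mpr ((div_le_one hM).mpr hμM)
  have hstep : ∀ t, 1 ≤ t → (∫ ω, f (θ (t + 1) ω)) - fstar
      ≤ (1 - μ / M) * ((∫ ω, f (θ t ω)) - fstar)
        + (D : ℝ) * G ^ 2 / (2 * M * N ^ 2) * σ t ^ 2 := by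
    intro t ht
    have hpointwise : ∀ ω, f (θ (t + 1) ω) - fstar
        ≤ (1 - μ / M) * (f (θ t ω) - fstar) + (G * σ t / N) ^ 2 / (2 * M) * ‖ν t ω‖ ^ 2 := by
      intro ω
      rw [hiter t ω ht]
      calc _ ≤ _ := excess_le_of_perturbed_gradient_step hM hsmooth hPL _ _
        _ = _ := by rw [norm_smul, mul_pow, Real.norm_eq_abs, sq_abs]; ring
    calc _ ≤ _ := integral_sub_le_of_forall_sub_le (hfint t) (hfint (t + 1)) (hmoment2int t)
          hpointwise
      _ ≤ (1 - μ / M) * ((∫ ω, f (θ t ω)) - fstar) + (G * σ t / N) ^ 2 / (2 * M) * D := by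
          gcongr; exact hmoment2 t
      _ = _ := by ring
  rw [mul_sum]
  simpa [hθ₁, mul_left_comm] using
    le_geom_sum_of_le_mul_add (a := fun t => (∫ ω, f (θ t ω)) - fstar)
      (b := fun t => (D : ℝ) * G ^ 2 / (2 * M * N ^ 2) * σ t ^ 2) hγ hstep T

/-- **Expected excess risk of Private Gradient Descent under the PL condition.**
With step size `1/M`, privacy noise `(G σ_t / N) ν_t` at step `t` (mean zero, second moment
at most `D`, independent of the past), `γ = 1 - μ/M`, the final expected excess risk satisfies
`E[f(θ_{T+1})] - f* ≤ γ^T (f(θ₁) - f*) + (D G²/(2 M N²)) ∑_{t=1}^T γ^{T-t} σ_t²`. -/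
theorem private_gradient_descent_excess_risk
    (D T : ℕ) (hT : 0 < T)
    (f : EuclideanSpace ℝ (Fin D) → ℝ) (M μ fstar G N : ℝ)
    (hdiff : Differentiable ℝ f) (hM : 0 < M) (hμ : 0 < μ) (hμM : μ ≤ M)
    (hsmooth : ∀ x y : EuclideanSpace ℝ (Fin D),
      f y ≤ f x + ⟪gradient f x, y - x⟫ + M / 2 * ‖y - x‖ ^ 2)
    (hfstar : IsGLB (Set.range f) fstar)
    (hPL : ∀ θ : EuclideanSpace ℝ (Fin D), ‖gradient f θ‖ ^ 2 ≥ 2 * μ * (f θ - fstar))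
    (hG : 0 < G) (hN : 0 < N)
    (σ : ℕ → ℝ) (hσ : ∀ t, 0 < σ t)
    (Ω : Type) [MeasureSpace Ω] [IsProbabilityMeasure (volume : Measure Ω)]
    (ν : ℕ → Ω → EuclideanSpace ℝ (Fin D))
    (hmeas : ∀ t, Measurable (ν t))
    (hint : ∀ t, Integrable (ν t))
    (hmean : ∀ t, ∫ ω, ν t ω = 0)
    (hmoment2int : ∀ t, Integrable (fun ω => ‖ν t ω‖ ^ 2))
    (hmoment2 : ∀ t, ∫ ω, ‖ν t ω‖ ^ 2 ≤ (D : ℝ))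
    (hindep : ∀ t, IndepFun (ν t) (fun ω (i : Fin (t - 1)) => ν (i + 1) ω))
    (θ₁ : EuclideanSpace ℝ (Fin D))
    (θ : ℕ → Ω → EuclideanSpace ℝ (Fin D))
    (hθ₁ : ∀ ω, θ 1 ω = θ₁)
    (hiter : ∀ t ω, 1 ≤ t →
      θ (t + 1) ω = θ t ω - (1 / M) • (gradient f (θ t ω) + (G * σ t / N) • ν t ω))
    (hfint : ∀ t, Integrable (fun ω => f (θ t ω))) :
    (∫ ω, f (θ (T + 1) ω)) - fstar ≤
      (1 - μ / M) ^ T * (f θ₁ - fstar)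
        + ((D : ℝ) * G ^ 2 / (2 * M * N ^ 2)) * ∑ t ∈ Icc 1 T, (1 - μ / M) ^ (T - t) * σ t ^ 2 :=
  private_gradient_descent_excess_risk_general D T f M μ fstar G N hM hμM hsmooth hPL σ Ω ν
    hmoment2int hmoment2 θ₁ θ hθ₁ hiter hfint
end

section
/- Fix c ∈ (0, 1) and α₀ > 0. There exist positive constants C₁, C₂ (depending only on c and α₀) such that for every real κ ≥ 1/(1 − c) and every real α with 0 < α ≤ α₀, setting γ = 1 − 1/κ and T = ln(1 + ln(1/γ)/α) / ln(1/γ), one has C₁ · (κ²/(κ + 1/α)) · ln(1 + 1/(κα)) ≤ γ^T + α κ T (1 − γ^T) ≤ C₂ · (κ²/(κ + 1/α)) · ln(1 + 1/(κα)). That is, with this choice of T the quantity γ^T + ακT(1 − γ^T) is Θ((κ²/(κ + 1/α)) ln(1 + 1/(κα))). -/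
/-!
With `L = ln(1/γ)` one has `γ^T = 1/P` for `P = 1 + L/α`, and the bound collapses to
`(1 + κ ln P)/P`. Since `γ = 1 - 1/κ ≥ c`, the elementary bounds `1 - γ ≤ L ≤ (1 - γ)/γ` pin
`L/α` between `y = 1/(κα)` and `y/c`, so `P` is comparable to `Q = 1 + y` and `ln P` to `ln Q`.
As `κ²/(κ + 1/α) = κ/Q`, both sides are `Θ(κ ln Q / Q)`; the additive `1` in the numerator is
absorbed because `κ ln Q ≥ κ/(κα + 1)` is bounded below in terms of `α₀`.
-/

open Real

lemma one_sub_le_log_one_div {γ : ℝ} (hγ : 0 < γ) : 1 - γ ≤ log (1 / γ) := by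
  rw [one_div, log_inv]
  linarith [log_le_sub_one_of_pos hγ]

lemma log_one_div_le_one_sub_div {γ : ℝ} (hγ : 0 < γ) : log (1 / γ) ≤ (1 - γ) / γ := by
  have h := log_le_sub_one_of_pos (one_div_pos.mpr hγ)
  rwa [div_sub_one hγ.ne'] at h

lemma rpow_log_div_log_one_div {γ P : ℝ} (hγ₀ : 0 < γ) (hγ₁ : γ < 1) (hP : 0 < P) :
    γ ^ (log P / log (1 / γ)) = P⁻¹ := by
  have hL : log (1 / γ) ≠ 0 := (log_pos (one_lt_one_div hγ₀ hγ₁)).ne'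
  have hexp : log γ * (log P / log (1 / γ)) = -log P := by
    rw [one_div, log_inv, neg_ne_zero] at hL
    rw [one_div, log_inv]
    field_simp
  rw [rpow_def_of_pos hγ₀, hexp, exp_neg, exp_log hP]

lemma log_one_add_div_le_div_log_one_add {c y : ℝ} (hc₀ : 0 < c) (hc₁ : c ≤ 1) (hy : 0 ≤ y) :
    log (1 + y / c) ≤ log (1 + y) / c := by
  have hbernoulli : 1 + 1 / c * y ≤ (1 + y) ^ (1 / c) :=
    one_add_mul_self_le_rpow_one_add (by linarith) (one_le_one_div hc₀ hc₁)
  have h := log_le_log (by positivity) hbernoulli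
  rwa [log_rpow (by positivity), one_div_mul_eq_div, one_div_mul_eq_div] at h

lemma log_one_div_one_sub_inv_mem_Icc {c κ : ℝ} (hc : 0 < c) (hκ : 0 < κ) (hcκ : c ≤ 1 - 1 / κ) :
    log (1 / (1 - 1 / κ)) ∈ Set.Icc (1 / κ) (1 / κ / c) := by
  have hγ : 0 < 1 - 1 / κ := hc.trans_le hcκ
  constructor
  · simpa only [sub_sub_cancel] using one_sub_le_log_one_div hγ
  · calc log (1 / (1 - 1 / κ)) ≤ (1 - (1 - 1 / κ)) / (1 - 1 / κ) := log_one_div_le_one_sub_div hγ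
      _ ≤ 1 / κ / c := by rw [sub_sub_cancel]; gcongr

lemma erub_eq_of_rpow_eq {γ α κ L T : ℝ} (hα : 0 < α) (hL : 0 < L)
    (hT : T = log (1 + L / α) / L) (hγT : γ ^ T = (1 + L / α)⁻¹) :
    γ ^ T + α * κ * T * (1 - γ ^ T) = (1 + κ * log (1 + L / α)) / (1 + L / α) := by
  rw [hγT, hT]
  field_simp
  ring

lemma mul_div_mul_log_le_one_add_mul_log_div {c κ x y : ℝ} (hc₀ : 0 < c) (hc₁ : c ≤ 1) (hκ : 0 ≤ κ)
    (hy : 0 ≤ y) (hyx : y ≤ x) (hxy : x ≤ y / c) :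
    c * (κ / (1 + y)) * log (1 + y) ≤ (1 + κ * log (1 + x)) / (1 + x) := by
  have hxQ : 1 + x ≤ (1 + y) / c := by
    rw [add_div]
    linarith [one_le_one_div hc₀ hc₁]
  calc c * (κ / (1 + y)) * log (1 + y) = κ * log (1 + y) / ((1 + y) / c) := by
        field_simp
    _ ≤ κ * log (1 + y) / (1 + x) := by
        gcongr
        · exact mul_nonneg hκ (log_nonneg (by linarith))
        · linarith
    _ ≤ κ * log (1 + x) / (1 + x) := by gcongr; linarith
    _ ≤ (1 + κ * log (1 + x)) / (1 + x) := by gcongr <;> linarith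

lemma one_add_mul_log_div_le_mul_div_mul_log {c κ x y K : ℝ} (hc₀ : 0 < c) (hc₁ : c ≤ 1)
    (hκ : 0 ≤ κ) (hy : 0 ≤ y) (hyx : y ≤ x) (hxy : x ≤ y / c) (hK : 1 ≤ K * (κ * log (1 + y))) :
    (1 + κ * log (1 + x)) / (1 + x) ≤ (K + 1 / c) * (κ / (1 + y)) * log (1 + y) := by
  have hlog : log (1 + x) ≤ log (1 + y) / c :=
    (log_le_log (by linarith) (by linarith)).trans
      (log_one_add_div_le_div_log_one_add hc₀ hc₁ hy)
  calc (1 + κ * log (1 + x)) / (1 + x) ≤ (1 + κ * log (1 + x)) / (1 + y) := by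
        gcongr
        exact add_nonneg zero_le_one (mul_nonneg hκ (log_nonneg (by linarith)))
    _ ≤ (K * (κ * log (1 + y)) + κ * (log (1 + y) / c)) / (1 + y) := by gcongr
    _ = (K + 1 / c) * (κ / (1 + y)) * log (1 + y) := by ring

lemma one_le_mul_mul_log_one_add_one_div {κ α α₀ : ℝ} (hκ : 1 ≤ κ) (hα : 0 < α) (hαα₀ : α ≤ α₀) :
    1 ≤ (α₀ + 1) * (κ * log (1 + 1 / (κ * α))) := by
  have hκα : 0 < κ * α := by positivity
  have hlog : 1 / (κ * α + 1) ≤ log (1 + 1 / (κ * α)) := by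
    have h := one_sub_inv_le_log_of_pos (show 0 < 1 + 1 / (κ * α) by positivity)
    convert h using 1
    field_simp
    ring
  calc (1 : ℝ) ≤ (α₀ + 1) * (κ * (1 / (κ * α + 1))) := by
        rw [mul_one_div, ← mul_div_assoc, le_div_iff₀ (by positivity)]
        nlinarith
    _ ≤ (α₀ + 1) * (κ * log (1 + 1 / (κ * α))) := by gcongr; linarith

/-- **The uniform-schedule excess-risk bound is `Θ((κ²/(κ + 1/α)) ln(1 + 1/(κα)))`.**
Fix `c ∈ (0,1)` and `α₀ > 0`. There are positive constants `C₁, C₂` (depending only on `c`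
and `α₀`) such that for all `κ ≥ 1/(1-c)` and `0 < α ≤ α₀`, with `γ = 1 - 1/κ` and
`T = ln(1 + ln(1/γ)/α)/ln(1/γ)` (a real number; `γ ^ T` is real exponentiation),
`C₁ (κ²/(κ + 1/α)) ln(1 + 1/(κα)) ≤ γ^T + ακT(1 - γ^T) ≤ C₂ (κ²/(κ + 1/α)) ln(1 + 1/(κα))`. -/
theorem uniform_schedule_erub_theta_bound
    (c α₀ : ℝ) (hc0 : 0 < c) (hc1 : c < 1) (hα₀ : 0 < α₀) :
    ∃ C₁ C₂ : ℝ, 0 < C₁ ∧ 0 < C₂ ∧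
      ∀ κ α : ℝ, 1 / (1 - c) ≤ κ → 0 < α → α ≤ α₀ →
        let γ : ℝ := 1 - 1 / κ
        let T : ℝ := Real.log (1 + Real.log (1 / γ) / α) / Real.log (1 / γ)
        C₁ * (κ ^ 2 / (κ + 1 / α)) * Real.log (1 + 1 / (κ * α))
            ≤ γ ^ T + α * κ * T * (1 - γ ^ T) ∧
          γ ^ T + α * κ * T * (1 - γ ^ T)
            ≤ C₂ * (κ ^ 2 / (κ + 1 / α)) * Real.log (1 + 1 / (κ * α)) := by
  refine ⟨c, α₀ + 1 + 1 / c, hc0, by positivity, ?_⟩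
  intro κ α hκ hα hαα₀ γ T
  have hκ₁ : 1 ≤ κ := (one_le_one_div (by linarith) (by linarith)).trans hκ
  have hκ₀ : 0 < κ := by linarith
  have hκ_inv : 1 / κ ≤ 1 - c := by rwa [one_div_le hκ₀ (by linarith)]
  have hγc : c ≤ γ := by linarith
  have hγ₁ : γ < 1 := by linarith [one_div_pos.mpr hκ₀]
  have hγ₀ : 0 < γ := hc0.trans_le hγc
  obtain ⟨hL_ge, hL_le⟩ := log_one_div_one_sub_inv_mem_Icc hc0 hκ₀ hγc
  have hL₀ : 0 < log (1 / γ) := log_pos (one_lt_one_div hγ₀ hγ₁)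
  have hyx : 1 / (κ * α) ≤ log (1 / γ) / α := by rw [← div_div]; gcongr
  have hxy : log (1 / γ) / α ≤ 1 / (κ * α) / c := by
    calc log (1 / γ) / α ≤ 1 / κ / c / α := by gcongr
      _ = 1 / (κ * α) / c := by ring
  have hshape : κ ^ 2 / (κ + 1 / α) = κ / (1 + 1 / (κ * α)) := by field_simp
  rw [erub_eq_of_rpow_eq hα hL₀ rfl (rpow_log_div_log_one_div hγ₀ hγ₁ (by positivity)), hshape]
  exact ⟨mul_div_mul_log_le_one_add_mul_log_div hc0 hc1.le hκ₀.le (by positivity) hyx hxy,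
    one_add_mul_log_div_le_mul_div_mul_log hc0 hc1.le hκ₀.le (by positivity) hyx hxy
      (one_le_mul_mul_log_one_add_one_div hκ₁ hα hαα₀)⟩
end

section
/- Let γ ∈ (0, 1) and α > 0, and consider g : ℝ → ℝ defined by g(T) = γ^T + α · ((1 − γ^{T/2})/(1 − √γ))². Then g attains its minimum over ℝ at T* = 2 · ln((α + (1 − √γ)²)/α) / ln(1/γ), and the minimum value equals g(T*) = s·α/(s·α + 1), where s = (1 − √γ)^{−2}. In particular g(T) ≥ sα/(sα + 1) for all real T. -/
/-! The substitution `u = γ^(T/2)` turns `g` into the quadratic `u² + α (1 - u)² / c` with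
`c = (1 - √γ)²`, whose minimum over ℝ is `α / (α + c) = sα/(sα + 1)`, attained at
`u = α / (α + c)`; and `T*` is exactly the exponent with `γ^(T*/2) = α / (α + c)`. -/

open Real

lemma div_add_le_sq_add_mul_one_sub_sq_div {c α : ℝ} (hc : 0 < c) (hαc : 0 < α + c) (u : ℝ) :
    α / (α + c) ≤ u ^ 2 + α * (1 - u) ^ 2 / c := by
  rw [add_div' _ _ _ hc.ne', div_le_div_iff₀ hαc hc]
  nlinarith [sq_nonneg (u * (α + c) - α)]

lemma sq_add_mul_one_sub_sq_div_at_div_add {c α : ℝ} (hc : c ≠ 0) (hαc : α + c ≠ 0) :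
    (α / (α + c)) ^ 2 + α * (1 - α / (α + c)) ^ 2 / c = α / (α + c) := by
  field_simp
  ring

lemma rpow_log_one_div_div_log_one_div {b x : ℝ} (hb : 0 < b) (hb1 : b ≠ 1) (hx : 0 < x) :
    b ^ (log (1 / x) / log (1 / b)) = x := by
  rw [one_div, one_div, log_inv, log_inv, neg_div_neg_eq, ← logb, rpow_logb hb hb1 hx]

/-- **Minimization of the dynamic-schedule excess-risk bound.**
For `γ ∈ (0,1)` and `α > 0`, the function
`g(T) = γ^T + α ((1 - γ^{T/2})/(1 - √γ))²` (real exponentiation) attains its minimum over ℝ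
at `T* = 2 ln((α + (1 - √γ)²)/α)/ln(1/γ)`, with minimum value `sα/(sα + 1)` where
`s = (1 - √γ)⁻²`; in particular `g(T) ≥ sα/(sα + 1)` for all real `T`. -/
theorem dynamic_schedule_erub_minimum
    (γ α : ℝ) (hγ0 : 0 < γ) (hγ1 : γ < 1) (hα : 0 < α) :
    let g : ℝ → ℝ := fun T => γ ^ T + α * ((1 - γ ^ (T / 2)) / (1 - Real.sqrt γ)) ^ 2
    let Tstar : ℝ := 2 * Real.log ((α + (1 - Real.sqrt γ) ^ 2) / α) / Real.log (1 / γ)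
    let s : ℝ := ((1 - Real.sqrt γ)⁻¹) ^ 2
    (∀ T : ℝ, s * α / (s * α + 1) ≤ g T) ∧ g Tstar = s * α / (s * α + 1) := by
  intro g Tstar s
  set c : ℝ := (1 - √γ) ^ 2 with hc_def
  have hc : 0 < c := pow_pos (sub_pos.2 ((sqrt_lt' one_pos).2 (by simpa using hγ1))) 2
  have hαc : 0 < α + c := by positivity
  have hs : s * α / (s * α + 1) = α / (α + c) := by
    simp only [s, inv_pow, ← hc_def]
    field_simp
  have hg : ∀ T, g T = (γ ^ (T / 2)) ^ 2 + α * (1 - γ ^ (T / 2)) ^ 2 / c := fun T => by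
    simp only [g, ← rpow_mul_natCast hγ0.le, div_pow, hc_def]
    norm_num
    ring
  have hTstar : γ ^ (Tstar / 2) = α / (α + c) := by
    rw [← rpow_log_one_div_div_log_one_div hγ0 hγ1.ne (div_pos hα hαc), one_div_div]
    simp only [Tstar, ← hc_def]
    ring_nf
  refine ⟨fun T => ?_, ?_⟩
  · rw [hs, hg]
    exact div_add_le_sq_add_mul_one_sub_sq_div hc hαc _
  · rw [hs, hg, hTstar]
    exact sq_add_mul_one_sub_sq_div_at_div_add hc.ne' hαc.ne'
end

section
/- Let κ ≥ 1 be real, γ = 1 − 1/κ, α > 0, and set s = (1 − √γ)^{−2}. Then (1/4) · (κ²α/(κ²α + 1)) ≤ s·α/(s·α + 1) ≤ 4 · (κ²α/(κ²α + 1)). Hence the minimal excess-risk upper bound of private gradient descent with the optimal dynamic schedule, which equals sα/(sα + 1), is Θ(κ²α/(κ²α + 1)) with absolute constants 1/4 and 4. -/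
/-!
Rationalising, `(1 - √γ)(1 + √γ) = 1 - γ = 1/κ`, so `s = κ²(1 + √γ)²` lies in `[κ², 4κ²]`.
The map `x ↦ x/(x+1)` is monotone on `[0, ∞)` and grows by at most a factor `c ≥ 1` when its
argument is scaled by `c`, which transfers these bounds to `sα/(sα + 1)`.
-/

open Real

theorem inv_one_sub_sqrt_one_sub_inv {κ : ℝ} (hκ : 1 ≤ κ) :
    (1 - √(1 - 1 / κ))⁻¹ = κ * (1 + √(1 - 1 / κ)) := by
  have hκ0 : 0 < κ := zero_lt_one.trans_le hκ
  have hsq : √(1 - 1 / κ) ^ 2 = 1 - 1 / κ :=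
    sq_sqrt (sub_nonneg.2 ((div_le_one hκ0).2 hκ))
  refine inv_eq_of_mul_eq_one_left ?_
  calc κ * (1 + √(1 - 1 / κ)) * (1 - √(1 - 1 / κ))
      = κ * (1 - √(1 - 1 / κ) ^ 2) := by ring
    _ = 1 := by rw [hsq]; field_simp; ring

theorem sq_le_inv_one_sub_sqrt_one_sub_inv_sq {κ : ℝ} (hκ : 1 ≤ κ) :
    κ ^ 2 ≤ (1 - √(1 - 1 / κ))⁻¹ ^ 2 := by
  rw [inv_one_sub_sqrt_one_sub_inv hκ]
  have : κ ≤ κ * (1 + √(1 - 1 / κ)) := le_mul_of_one_le_right (by linarith) (by simp)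
  gcongr

theorem inv_one_sub_sqrt_one_sub_inv_sq_le {κ : ℝ} (hκ : 1 ≤ κ) :
    (1 - √(1 - 1 / κ))⁻¹ ^ 2 ≤ 4 * κ ^ 2 := by
  rw [inv_one_sub_sqrt_one_sub_inv hκ]
  have hg : √(1 - 1 / κ) ≤ 1 := sqrt_le_one.2 (by simp; positivity)
  calc (κ * (1 + √(1 - 1 / κ))) ^ 2 ≤ (κ * 2) ^ 2 := by gcongr; linarith [sqrt_nonneg (1 - 1 / κ)]
    _ = 4 * κ ^ 2 := by ring

theorem div_add_one_le_div_add_one {a b : ℝ} (ha : 0 ≤ a) (hab : a ≤ b) :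
    a / (a + 1) ≤ b / (b + 1) := by
  rw [div_le_div_iff₀ (by linarith) (by linarith)]
  linarith

theorem div_add_one_le_mul_div_add_one {a b c : ℝ} (ha : 0 ≤ a) (hb : 0 ≤ b) (hc : 1 ≤ c)
    (hbc : b ≤ c * a) : b / (b + 1) ≤ c * (a / (a + 1)) := by
  have hca : 0 ≤ c * a := by positivity
  calc b / (b + 1) ≤ c * a / (c * a + 1) := div_add_one_le_div_add_one hb hbc
    _ ≤ c * a / (a + 1) := by
        gcongr
        exact le_mul_of_one_le_left ha hc
    _ = c * (a / (a + 1)) := mul_div_assoc _ _ _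

/-- **The minimal dynamic-schedule bound is `Θ(κ²α/(κ²α + 1))` with constants 1/4 and 4.**
For real `κ ≥ 1`, `γ = 1 - 1/κ`, `α > 0` and `s = (1 - √γ)⁻²`,
`(1/4) κ²α/(κ²α + 1) ≤ sα/(sα + 1) ≤ 4 κ²α/(κ²α + 1)`. -/
theorem dynamic_schedule_min_theta_bound
    (κ α : ℝ) (hκ : 1 ≤ κ) (hα : 0 < α) :
    let γ : ℝ := 1 - 1 / κ
    let s : ℝ := ((1 - Real.sqrt γ)⁻¹) ^ 2
    (1 / 4) * (κ ^ 2 * α / (κ ^ 2 * α + 1)) ≤ s * α / (s * α + 1) ∧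
      s * α / (s * α + 1) ≤ 4 * (κ ^ 2 * α / (κ ^ 2 * α + 1)) := by
  intro γ s
  have hκα : 0 ≤ κ ^ 2 * α := by positivity
  have hlower : κ ^ 2 * α ≤ s * α :=
    mul_le_mul_of_nonneg_right (sq_le_inv_one_sub_sqrt_one_sub_inv_sq hκ) hα.le
  have hupper : s * α ≤ 4 * (κ ^ 2 * α) := by
    rw [← mul_assoc]
    exact mul_le_mul_of_nonneg_right (inv_one_sub_sqrt_one_sub_inv_sq_le hκ) hα.le
  refine ⟨?_, div_add_one_le_mul_div_add_one hκα (hκα.trans hlower) (by norm_num) hupper⟩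
  calc (1 / 4) * (κ ^ 2 * α / (κ ^ 2 * α + 1)) ≤ κ ^ 2 * α / (κ ^ 2 * α + 1) :=
        mul_le_of_le_one_left (by positivity) (by norm_num)
    _ ≤ s * α / (s * α + 1) := div_add_one_le_div_add_one hκα hlower
end

section
/- Let γ ∈ (0, 1) and β ∈ (0, 1). The set S = {t ∈ ℕ, t ≥ 1 : γ^{t−1} ≥ (1 − β)/(1 − β^t)} is nonempty (it contains t = 1) and finite; let T̂ = max S. Then: (i) for every natural number t with 1 ≤ t ≤ T̂, (1 − β)/(1 − β^t) ≤ γ^{t−1}; and (ii) for every natural number t > T̂, (1 − β)/(1 − β^t) < γ^{T̂ − 1}. -/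
/-!
Writing `A t = ∑_{k<t} β^k`, the normalization factor is `(1 - β)/(1 - β^t) = (A t)⁻¹`, so
`t = n + 1 ∈ S` iff `(γ⁻¹)^n ≤ A (n + 1)`. The gap `A (n + 1) - (γ⁻¹)^n` vanishes at `n = 0` and is
concave in `n`: its increments `β^(n+1) - (γ⁻¹)^n (γ⁻¹ - 1)` decrease. A concave sequence that is
nonnegative at `0` and at `m` is nonnegative in between, which gives (i). Finiteness holds because
the factor is at least `1 - β` while `γ^(t-1) → 0`, and (ii) because the factor decreases in `t`.
-/

open Finset

section ConcaveSequence

variable {α : Type*} [AddCommGroup α] [LinearOrder α] [IsOrderedAddMonoid α]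

theorem le_of_antitone_sub_of_le {d : ℕ → α} (hd : Antitone fun n => d (n + 1) - d n)
    {n m : ℕ} (hnm : n ≤ m) (hm : d 0 ≤ d m) : d 0 ≤ d n := by
  by_contra! hn
  obtain ⟨k, hk, hdk⟩ : ∃ k ∈ range n, d (k + 1) - d k < 0 := by
    refine exists_lt_of_sum_lt (g := fun _ => (0 : α)) ?_
    rw [sum_range_sub, sum_const_zero]
    exact sub_neg.mpr hn
  have hkn : k < n := mem_range.mp hk
  have hmn : d m ≤ d n := by
    clear hm
    induction m, hnm using Nat.le_induction with
    | base => exact le_rfl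
    | succ m hnm ih =>
      have : d (m + 1) - d m < 0 := (hd (by omega : k ≤ m)).trans_lt hdk
      exact (sub_neg.mp this).le.trans ih
  exact hn.not_ge (hm.trans hmn)

end ConcaveSequence

section Normalization

variable {β γ : ℝ}

theorem one_sub_div_one_sub_pow_eq_inv_geom_sum (hβ : β ≠ 1) (t : ℕ) :
    (1 - β) / (1 - β ^ t) = (∑ k ∈ range t, β ^ k)⁻¹ := by
  rw [geom_sum_eq hβ, inv_div, ← neg_sub β, ← neg_sub (β ^ t), neg_div_neg_eq]

theorem one_sub_le_one_sub_div_one_sub_pow (hβ0 : 0 ≤ β) (hβ1 : β < 1) {t : ℕ} (ht : 1 ≤ t) :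
    1 - β ≤ (1 - β) / (1 - β ^ t) := by
  have hβt : β ^ t < 1 := pow_lt_one₀ hβ0 hβ1 (by omega)
  exact le_div_self (by linarith) (by linarith) (by linarith [pow_nonneg hβ0 t])

theorem one_sub_div_one_sub_pow_lt_of_lt (hβ0 : 0 < β) (hβ1 : β < 1) {s t : ℕ} (hs : 1 ≤ s)
    (hst : s < t) : (1 - β) / (1 - β ^ t) < (1 - β) / (1 - β ^ s) := by
  have hβs : β ^ s < 1 := pow_lt_one₀ hβ0.le hβ1 (by omega)
  have hβts : β ^ t < β ^ s := pow_lt_pow_right_of_lt_one₀ hβ0 hβ1 hst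
  exact div_lt_div_of_pos_left (by linarith) (by linarith) (by linarith)

noncomputable def crossoverGap (β γ : ℝ) (n : ℕ) : ℝ :=
  ∑ k ∈ range (n + 1), β ^ k - γ⁻¹ ^ n

@[simp]
theorem crossoverGap_zero : crossoverGap β γ 0 = 0 := by
  simp [crossoverGap]

theorem crossoverGap_succ_sub (n : ℕ) :
    crossoverGap β γ (n + 1) - crossoverGap β γ n = β ^ (n + 1) - γ⁻¹ ^ n * (γ⁻¹ - 1) := by
  simp only [crossoverGap, sum_range_succ _ (n + 1), pow_succ γ⁻¹]
  ring

theorem antitone_crossoverGap_succ_sub (hβ0 : 0 ≤ β) (hβ1 : β ≤ 1) (hγ0 : 0 < γ) (hγ1 : γ ≤ 1) :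
    Antitone fun n => crossoverGap β γ (n + 1) - crossoverGap β γ n := by
  have hγinv : 1 ≤ γ⁻¹ := one_le_inv₀ hγ0 |>.mpr hγ1
  intro n m hnm
  simp only [crossoverGap_succ_sub]
  exact sub_le_sub (pow_le_pow_of_le_one hβ0 hβ1 (by omega))
    (mul_le_mul_of_nonneg_right (pow_le_pow_right₀ hγinv hnm) (by linarith))

theorem crossoverGap_nonneg_of_le (hβ0 : 0 ≤ β) (hβ1 : β ≤ 1) (hγ0 : 0 < γ) (hγ1 : γ ≤ 1)
    {n m : ℕ} (hnm : n ≤ m) (hm : 0 ≤ crossoverGap β γ m) : 0 ≤ crossoverGap β γ n := by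
  have := le_of_antitone_sub_of_le (antitone_crossoverGap_succ_sub hβ0 hβ1 hγ0 hγ1) hnm
    (crossoverGap_zero.trans_le hm)
  rwa [crossoverGap_zero] at this

theorem one_sub_div_one_sub_pow_le_pow_iff (hβ0 : 0 ≤ β) (hβ1 : β < 1) (hγ0 : 0 < γ) (n : ℕ) :
    (1 - β) / (1 - β ^ (n + 1)) ≤ γ ^ n ↔ 0 ≤ crossoverGap β γ n := by
  have hsum : 0 < ∑ k ∈ range (n + 1), β ^ k :=
    sum_pos' (fun k _ => pow_nonneg hβ0 k) ⟨0, by simp⟩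
  rw [one_sub_div_one_sub_pow_eq_inv_geom_sum hβ1.ne, inv_le_comm₀ hsum (pow_pos hγ0 n),
    ← inv_pow, crossoverGap, sub_nonneg]

end Normalization

/-- **The crossover step `T̂` of the momentum normalization factor.**
For `γ, β ∈ (0,1)`, the set `S = {t ≥ 1 : γ^{t-1} ≥ (1-β)/(1-β^t)}` contains `1` and is
finite; for its maximum `T̂`: (i) `(1-β)/(1-β^t) ≤ γ^{t-1}` for all `1 ≤ t ≤ T̂`, and
(ii) `(1-β)/(1-β^t) < γ^{T̂-1}` for all `t > T̂`. -/
theorem momentum_normalization_crossover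
    (γ β : ℝ) (hγ0 : 0 < γ) (hγ1 : γ < 1) (hβ0 : 0 < β) (hβ1 : β < 1) :
    let S : Set ℕ := {t | 1 ≤ t ∧ (1 - β) / (1 - β ^ t) ≤ γ ^ (t - 1)}
    1 ∈ S ∧ S.Finite ∧
      ∃ That : ℕ, That ∈ S ∧ (∀ t ∈ S, t ≤ That) ∧
        (∀ t : ℕ, 1 ≤ t → t ≤ That → (1 - β) / (1 - β ^ t) ≤ γ ^ (t - 1)) ∧
        (∀ t : ℕ, That < t → (1 - β) / (1 - β ^ t) < γ ^ (That - 1)) := by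
  intro S
  have hmem (n : ℕ) : n + 1 ∈ S ↔ 0 ≤ crossoverGap β γ n := by
    simpa [S] using one_sub_div_one_sub_pow_le_pow_iff hβ0.le hβ1 hγ0 n
  have h1 : 1 ∈ S := (hmem 0).mpr crossoverGap_zero.ge
  obtain ⟨N, hN⟩ := exists_pow_lt_of_lt_one (sub_pos.mpr hβ1) hγ1
  have hbdd : S ⊆ Set.Iic N := by
    rintro t ⟨ht1, ht⟩
    rw [Set.mem_Iic]
    by_contra! hNt
    have hγt : γ ^ (t - 1) ≤ γ ^ N := pow_le_pow_of_le_one hγ0.le hγ1.le (by omega)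
    linarith [one_sub_le_one_sub_div_one_sub_pow hβ0.le hβ1 ht1]
  have hTS : sSup S ∈ S := Nat.sSup_mem ⟨1, h1⟩ ⟨N, hbdd⟩
  refine ⟨h1, (Set.finite_Iic N).subset hbdd, sSup S, hTS, fun t ht => le_csSup ⟨N, hbdd⟩ ht,
    ?_, fun t hTt => (one_sub_div_one_sub_pow_lt_of_lt hβ0 hβ1 hTS.1 hTt).trans_le hTS.2⟩
  intro t ht1 htT
  obtain ⟨n, rfl⟩ : ∃ n, t = n + 1 := ⟨t - 1, by omega⟩
  obtain ⟨m, hm⟩ : ∃ m, sSup S = m + 1 := ⟨sSup S - 1, by omega⟩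
  refine ((hmem n).mpr ?_).2
  exact crossoverGap_nonneg_of_le hβ0.le hβ1.le hγ0 hγ1.le (by omega) ((hmem m).mp (hm ▸ hTS))
end

section
/- Let γ ∈ (0, 1), β ∈ (0, γ), T a positive integer, and let w_1, …, w_{T−1} be nonnegative reals. Then ∑_{t=1}^T γ^{T−t} ∑_{i=1}^{t−1} w_i ∑_{k=t−i}^{t−1} k β^k ≤ (2βγ / ((γ − β)²(1 − β))) · ∑_{i=1}^{T−1} γ^{T−i} w_i. -/
/-!
Exchange the sums over `t` and `i` and write `t = i + d`. The inner sum `∑_{k=d}^{t-1} k β^k` is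
at most the full tail `∑_{k ≥ d} k β^k = β^d (d/(1-β) + β/(1-β)²)`, and
`γ^{T-t} β^d = γ^{T-i} (β/γ)^d`, so the weight of `w_i` is `γ^{T-i}` times a series in
`a = β/γ < 1`, controlled by `∑ a^d ≤ a/(1-a)` and `∑ d a^d ≤ a/(1-a)²`. The resulting constant
`βγ/((γ-β)²(1-β)) + β²/((γ-β)(1-β)²)` is at most twice its first term since
`β(γ-β) ≤ γ(1-β)`.
-/

open Finset

theorem sum_Icc_sum_Icc_sub_one_comm {M : Type*} [AddCommMonoid M] (T : ℕ) (F : ℕ → ℕ → M) :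
    ∑ t ∈ Icc 1 T, ∑ i ∈ Icc 1 (t - 1), F t i
      = ∑ i ∈ Icc 1 (T - 1), ∑ d ∈ Icc 1 (T - i), F (i + d) i := by
  rw [sum_sigma', sum_sigma']
  apply sum_nbij' (fun p => ⟨p.2, p.1 - p.2⟩) (fun p => ⟨p.2 + p.1, p.1⟩)
  all_goals
    rintro ⟨t, i⟩ h
    simp only [mem_sigma, mem_Icc] at h ⊢
    first | omega | (congr 1; omega)

theorem sum_coe_mul_pow_le {a : ℝ} (h0 : 0 ≤ a) (h1 : a < 1) (s : Finset ℕ) :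
    ∑ m ∈ s, (m : ℝ) * a ^ m ≤ a / (1 - a) ^ 2 := by
  have ha : ‖a‖ < 1 := by rwa [Real.norm_of_nonneg h0]
  rw [← tsum_coe_mul_geometric_of_norm_lt_one ha]
  exact (hasSum_coe_mul_geometric_of_norm_lt_one ha).summable.sum_le_tsum s
    fun m _ => by positivity

theorem sum_Icc_coe_mul_pow_le {β : ℝ} (h0 : 0 ≤ β) (h1 : β < 1) (j n : ℕ) :
    ∑ k ∈ Icc j n, (k : ℝ) * β ^ k ≤ β ^ j * (j / (1 - β) + β / (1 - β) ^ 2) := by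
  have hgeom : ∑ m ∈ range (n + 1 - j), β ^ m ≤ 1 / (1 - β) := by
    have := geom_sum_Ico_le_of_lt_one (m := 0) (n := n + 1 - j) h0 h1
    rwa [← range_eq_Ico, pow_zero] at this
  calc ∑ k ∈ Icc j n, (k : ℝ) * β ^ k
      = β ^ j * (j * ∑ m ∈ range (n + 1 - j), β ^ m
          + ∑ m ∈ range (n + 1 - j), (m : ℝ) * β ^ m) := by
        rw [← Ico_add_one_right_eq_Icc, sum_Ico_eq_sum_range, mul_sum, ← sum_add_distrib, mul_sum]
        refine sum_congr rfl fun m _ => ?_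
        push_cast; ring
    _ ≤ β ^ j * (j * (1 / (1 - β)) + β / (1 - β) ^ 2) := by
        gcongr
        exact sum_coe_mul_pow_le h0 h1 _
    _ = β ^ j * (j / (1 - β) + β / (1 - β) ^ 2) := by ring

theorem sum_Icc_one_pow_mul_le {a p q : ℝ} (h0 : 0 ≤ a) (h1 : a < 1) (hp : 0 ≤ p) (hq : 0 ≤ q)
    (n : ℕ) :
    ∑ d ∈ Icc 1 n, a ^ d * (d * p + q) ≤ p * (a / (1 - a) ^ 2) + q * (a / (1 - a)) := by
  have hgeom : ∑ d ∈ Icc 1 n, a ^ d ≤ a / (1 - a) := by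
    simpa [Ico_add_one_right_eq_Icc] using geom_sum_Ico_le_of_lt_one (m := 1) (n := n + 1) h0 h1
  calc ∑ d ∈ Icc 1 n, a ^ d * (d * p + q)
      = p * ∑ d ∈ Icc 1 n, (d : ℝ) * a ^ d + q * ∑ d ∈ Icc 1 n, a ^ d := by
        rw [mul_sum, mul_sum, ← sum_add_distrib]
        exact sum_congr rfl fun d _ => by ring
    _ ≤ p * (a / (1 - a) ^ 2) + q * (a / (1 - a)) := by
        gcongr
        exact sum_coe_mul_pow_le h0 h1 _

theorem sum_pow_mul_sum_Icc_coe_mul_pow_le {γ β : ℝ} (hγ : 0 < γ) (hβ0 : 0 ≤ β) (hβ1 : β < 1)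
    (hβγ : β < γ) (m : ℕ) (n : ℕ → ℕ) :
    ∑ d ∈ Icc 1 m, γ ^ (m - d) * ∑ k ∈ Icc d (n d), (k : ℝ) * β ^ k
      ≤ γ ^ m * (β * γ / ((γ - β) ^ 2 * (1 - β)) + β ^ 2 / ((γ - β) * (1 - β) ^ 2)) := by
  have hβγ' : 0 < γ - β := sub_pos.2 hβγ
  have h1β : 0 < 1 - β := sub_pos.2 hβ1
  have hpow : ∀ d ∈ Icc 1 m, γ ^ (m - d) * β ^ d = γ ^ m * (β / γ) ^ d := by
    intro d hd
    rw [← Nat.sub_add_cancel (mem_Icc.1 hd).2, Nat.add_sub_cancel, pow_add, div_pow]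
    field_simp
  calc ∑ d ∈ Icc 1 m, γ ^ (m - d) * ∑ k ∈ Icc d (n d), (k : ℝ) * β ^ k
      ≤ ∑ d ∈ Icc 1 m, γ ^ (m - d) * (β ^ d * (d / (1 - β) + β / (1 - β) ^ 2)) := by
        gcongr with d
        exact sum_Icc_coe_mul_pow_le hβ0 hβ1 d (n d)
    _ = γ ^ m * ∑ d ∈ Icc 1 m, (β / γ) ^ d * (d * (1 - β)⁻¹ + β / (1 - β) ^ 2) := by
        rw [mul_sum]
        refine sum_congr rfl fun d hd => ?_
        rw [← mul_assoc, hpow d hd]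
        ring
    _ ≤ γ ^ m * ((1 - β)⁻¹ * (β / γ / (1 - β / γ) ^ 2)
          + β / (1 - β) ^ 2 * (β / γ / (1 - β / γ))) := by
        gcongr
        exact sum_Icc_one_pow_mul_le (by positivity) ((div_lt_one hγ).2 hβγ) (by positivity)
          (by positivity) m
    _ = γ ^ m * (β * γ / ((γ - β) ^ 2 * (1 - β)) + β ^ 2 / ((γ - β) * (1 - β) ^ 2)) := by
        field_simp

theorem momentum_const_le {γ β : ℝ} (hβ : 0 ≤ β) (hβγ : β < γ) (hγ : γ ≤ 1) :
    β * γ / ((γ - β) ^ 2 * (1 - β)) + β ^ 2 / ((γ - β) * (1 - β) ^ 2)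
      ≤ 2 * β * γ / ((γ - β) ^ 2 * (1 - β)) := by
  have hβγ' : 0 < γ - β := sub_pos.2 hβγ
  have h1β : 0 < 1 - β := by linarith
  have hγ0 : 0 < γ := hβ.trans_lt hβγ
  have key : β * (γ - β) ≤ γ * (1 - β) := by nlinarith [sq_nonneg (γ - β)]
  have hterm : β ^ 2 / ((γ - β) * (1 - β) ^ 2) ≤ β * γ / ((γ - β) ^ 2 * (1 - β)) := by
    rw [div_le_div_iff₀ (by positivity) (by positivity)]
    calc β ^ 2 * ((γ - β) ^ 2 * (1 - β)) = β * (γ - β) * (1 - β) * (β * (γ - β)) := by ring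
      _ ≤ β * (γ - β) * (1 - β) * (γ * (1 - β)) := by gcongr
      _ = β * γ * ((γ - β) * (1 - β) ^ 2) := by ring
  rw [mul_assoc 2, two_mul, add_div]
  exact add_le_add le_rfl hterm

theorem momentum_weighted_sum_inequality_general
    (γ β : ℝ) (hγ0 : 0 < γ) (hγ1 : γ < 1) (hβ0 : 0 < β) (hβγ : β < γ)
    (T : ℕ) (w : ℕ → ℝ) (hw : ∀ i, 0 ≤ w i) :
    ∑ t ∈ Icc 1 T, γ ^ (T - t) *
        ∑ i ∈ Icc 1 (t - 1), w i * ∑ k ∈ Icc (t - i) (t - 1), (k : ℝ) * β ^ k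
      ≤ (2 * β * γ / ((γ - β) ^ 2 * (1 - β))) * ∑ i ∈ Icc 1 (T - 1), γ ^ (T - i) * w i := by
  calc ∑ t ∈ Icc 1 T, γ ^ (T - t) *
        ∑ i ∈ Icc 1 (t - 1), w i * ∑ k ∈ Icc (t - i) (t - 1), (k : ℝ) * β ^ k
      = ∑ t ∈ Icc 1 T, ∑ i ∈ Icc 1 (t - 1),
          γ ^ (T - t) * (w i * ∑ k ∈ Icc (t - i) (t - 1), (k : ℝ) * β ^ k) :=
        sum_congr rfl fun t _ => mul_sum _ _ _
    _ = ∑ i ∈ Icc 1 (T - 1), w i * ∑ d ∈ Icc 1 (T - i),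
          γ ^ (T - i - d) * ∑ k ∈ Icc d (i + d - 1), (k : ℝ) * β ^ k := by
        rw [sum_Icc_sum_Icc_sub_one_comm]
        refine sum_congr rfl fun i _ => ?_
        rw [mul_sum]
        refine sum_congr rfl fun d _ => ?_
        rw [Nat.add_sub_cancel_left, Nat.sub_sub]
        ring
    _ ≤ ∑ i ∈ Icc 1 (T - 1), w i * (γ ^ (T - i) * (2 * β * γ / ((γ - β) ^ 2 * (1 - β)))) := by
        gcongr with i
        · exact hw i
        refine (sum_pow_mul_sum_Icc_coe_mul_pow_le hγ0 hβ0.le (hβγ.trans hγ1) hβγ _ _).trans ?_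
        gcongr
        exact momentum_const_le hβ0.le hβγ hγ1.le
    _ = (2 * β * γ / ((γ - β) ^ 2 * (1 - β))) * ∑ i ∈ Icc 1 (T - 1), γ ^ (T - i) * w i := by
        rw [mul_sum]
        exact sum_congr rfl fun i _ => by ring

/-- **Weighted-sum inequality for the momentum analysis.**
For `γ ∈ (0,1)`, `β ∈ (0,γ)`, a positive integer `T` and nonnegative reals `w_1, …, w_{T-1}`,
`∑_{t=1}^T γ^{T-t} ∑_{i=1}^{t-1} w_i ∑_{k=t-i}^{t-1} k β^k
  ≤ (2βγ/((γ-β)²(1-β))) ∑_{i=1}^{T-1} γ^{T-i} w_i`. -/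
theorem momentum_weighted_sum_inequality
    (γ β : ℝ) (hγ0 : 0 < γ) (hγ1 : γ < 1) (hβ0 : 0 < β) (hβγ : β < γ)
    (T : ℕ) (hT : 0 < T) (w : ℕ → ℝ) (hw : ∀ i, 0 ≤ w i) :
    ∑ t ∈ Icc 1 T, γ ^ (T - t) *
        ∑ i ∈ Icc 1 (t - 1), w i * ∑ k ∈ Icc (t - i) (t - 1), (k : ℝ) * β ^ k
      ≤ (2 * β * γ / ((γ - β) ^ 2 * (1 - β))) * ∑ i ∈ Icc 1 (T - 1), γ ^ (T - i) * w i :=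
  momentum_weighted_sum_inequality_general γ β hγ0 hγ1 hβ0 hβγ T w hw
end

section
/- Let E = EuclideanSpace ℝ (Fin D), let f : E → ℝ be differentiable with M-Lipschitz gradient (‖∇f(x) − ∇f(y)‖ ≤ M‖x − y‖ for all x, y), let β ∈ (0, 1), γ ∈ (0, 1) with β < γ, η₀ > 0, and set b_t = 1 − β^t and η_t = η₀/(2M). Let θ_1, …, θ_T ∈ E and v_2, …, v_{T+1} ∈ E be sequences satisfying θ_{i+1} = θ_i − η_i v_{i+1}/b_i for 1 ≤ i ≤ T − 1. Then ∑_{t=1}^T γ^{T−t} (2(1 − β)η_t / b_t) ∑_{i=1}^t β^{t−i} ‖∇f(θ_t) − ∇f(θ_i)‖² ≤ (η₀³ β γ / (2M(1 − β)³(γ − β)²)) · ∑_{i=1}^{T−1} γ^{T−i} ‖v_{i+1}‖². -/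
open Finset
lemma geom_aux (r : ℝ) (h0 : 0 ≤ r) (h1 : r < 1) (N : ℕ) :
    ∑ l ∈ range N, r ^ l ≤ (1 - r)⁻¹ := by
  have hs := hasSum_geometric_of_lt_one h0 h1
  have := Summable.sum_le_tsum (range N) (fun i _ => by positivity) hs.summable
  rwa [hs.tsum_eq] at this

lemma geom_aux2 (r : ℝ) (h0 : 0 ≤ r) (h1 : r < 1) (N : ℕ) :
    ∑ l ∈ range N, (l : ℝ) * r ^ l ≤ r / (1 - r) ^ 2 := by
  have hs : HasSum (fun n : ℕ => (n : ℝ) * r ^ n) (r / (1 - r) ^ 2) :=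
    hasSum_coe_mul_geometric_of_norm_lt_one
      (by rwa [Real.norm_eq_abs, abs_of_nonneg h0])
  have := Summable.sum_le_tsum (range N) (fun i _ => by positivity) hs.summable
  rwa [hs.tsum_eq] at this

lemma inner_c_bound (β : ℝ) (hβ0 : 0 < β) (hβ1 : β < 1) (t j : ℕ) (htj : j + 1 ≤ t) :
    ∑ i ∈ Icc 1 j, ((t - i : ℕ) : ℝ) * β ^ (t - i)
      ≤ β ^ (t - j) * (((t - j : ℕ) : ℝ) * (1 - β)⁻¹ + β / (1 - β) ^ 2) := by
  have h1β : 0 < 1 - β := by linarith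
  have e1 : ∑ i ∈ Icc 1 j, ((t - i : ℕ) : ℝ) * β ^ (t - i)
      = ∑ l ∈ range j, ((t - (1 + l) : ℕ) : ℝ) * β ^ (t - (1 + l)) := by
    rw [← Finset.Ico_add_one_right_eq_Icc, sum_Ico_eq_sum_range]
    simp
  have e2 : ∑ l ∈ range j, ((t - (1 + l) : ℕ) : ℝ) * β ^ (t - (1 + l))
      = ∑ l ∈ range j, ((t - (1 + (j - 1 - l)) : ℕ) : ℝ) * β ^ (t - (1 + (j - 1 - l))) :=
    (sum_range_reflect (fun l => ((t - (1 + l) : ℕ) : ℝ) * β ^ (t - (1 + l))) j).symm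
  have e3 : ∑ l ∈ range j, ((t - (1 + (j - 1 - l)) : ℕ) : ℝ) * β ^ (t - (1 + (j - 1 - l)))
      = ∑ l ∈ range j, ((((t - j) : ℕ) : ℝ) + (l : ℝ)) * (β ^ (t - j) * β ^ l) := by
    refine sum_congr rfl fun l hl => ?_
    rw [mem_range] at hl
    have h : t - (1 + (j - 1 - l)) = (t - j) + l := by omega
    rw [h, pow_add]
    push_cast
    ring
  rw [e1, e2, e3]
  have e4 : ∑ l ∈ range j, ((((t - j) : ℕ) : ℝ) + (l : ℝ)) * (β ^ (t - j) * β ^ l)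
      = β ^ (t - j) * (((t - j : ℕ) : ℝ) * ∑ l ∈ range j, β ^ l
          + ∑ l ∈ range j, (l : ℝ) * β ^ l) := by
    rw [mul_add, mul_sum, mul_sum, mul_sum, ← sum_add_distrib]
    exact sum_congr rfl fun l _ => by ring
  rw [e4]
  have hb : (0:ℝ) ≤ β ^ (t - j) := by positivity
  apply mul_le_mul_of_nonneg_left _ hb
  have h1 := geom_aux β hβ0.le hβ1 j
  have h2 := geom_aux2 β hβ0.le hβ1 j
  have hm : (0:ℝ) ≤ ((t - j : ℕ) : ℝ) := by positivity
  nlinarith [mul_le_mul_of_nonneg_left h1 hm]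

lemma coef_bound (β γ : ℝ) (hβ0 : 0 < β) (hβγ : β < γ) (hγ1 : γ < 1) (T j : ℕ)
    (hj : 1 ≤ j) :
    ∑ t ∈ Icc (j + 1) T, γ ^ (T - t) * ∑ i ∈ Icc 1 j, ((t - i : ℕ) : ℝ) * β ^ (t - i)
      ≤ γ ^ (T - j) * ((1 - β)⁻¹ * (β / γ / (1 - β / γ) ^ 2)
          + β / (1 - β) ^ 2 * (β / γ * (1 - β / γ)⁻¹)) := by
  have hβ1 : β < 1 := hβγ.trans hγ1
  have hγ0 : 0 < γ := hβ0.trans hβγ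
  have h1β : 0 < 1 - β := by linarith
  set r : ℝ := β / γ with hrdef
  have hr0 : 0 < r := div_pos hβ0 hγ0
  have hr1 : r < 1 := (div_lt_one hγ0).2 hβγ
  have h1r : 0 < 1 - r := by linarith
  calc ∑ t ∈ Icc (j + 1) T, γ ^ (T - t) * ∑ i ∈ Icc 1 j, ((t - i : ℕ) : ℝ) * β ^ (t - i)
      ≤ ∑ t ∈ Icc (j + 1) T,
          γ ^ (T - j) * (r ^ (t - j) * (((t - j : ℕ) : ℝ) * (1 - β)⁻¹ + β / (1 - β) ^ 2)) := by
        refine sum_le_sum fun t ht => ?_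
        rw [mem_Icc] at ht
        have hkey : γ ^ (T - t) * β ^ (t - j) = γ ^ (T - j) * r ^ (t - j) := by
          have h : T - j = (T - t) + (t - j) := by omega
          rw [h, pow_add, hrdef, div_pow]
          field_simp
        calc γ ^ (T - t) * ∑ i ∈ Icc 1 j, ((t - i : ℕ) : ℝ) * β ^ (t - i)
            ≤ γ ^ (T - t) * (β ^ (t - j) * (((t - j : ℕ) : ℝ) * (1 - β)⁻¹ + β / (1 - β) ^ 2)) := by
              exact mul_le_mul_of_nonneg_left (inner_c_bound β hβ0 hβ1 t j ht.1) (by positivity)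
          _ = γ ^ (T - j) * (r ^ (t - j) * (((t - j : ℕ) : ℝ) * (1 - β)⁻¹ + β / (1 - β) ^ 2)) := by
              rw [← mul_assoc, hkey, mul_assoc]
    _ = γ ^ (T - j) * ∑ t ∈ Icc (j + 1) T,
          r ^ (t - j) * (((t - j : ℕ) : ℝ) * (1 - β)⁻¹ + β / (1 - β) ^ 2) := by
        rw [mul_sum]
    _ ≤ γ ^ (T - j) * ((1 - β)⁻¹ * (r / (1 - r) ^ 2) + β / (1 - β) ^ 2 * (r * (1 - r)⁻¹)) := by
        refine mul_le_mul_of_nonneg_left ?_ (by positivity)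
        have e1 : ∑ t ∈ Icc (j + 1) T,
              r ^ (t - j) * (((t - j : ℕ) : ℝ) * (1 - β)⁻¹ + β / (1 - β) ^ 2)
            = ∑ l ∈ range (T + 1 - (j + 1)),
              r ^ (l + 1) * (((l : ℝ) + 1) * (1 - β)⁻¹ + β / (1 - β) ^ 2) := by
          rw [← Finset.Ico_add_one_right_eq_Icc, sum_Ico_eq_sum_range]
          refine sum_congr rfl fun l _ => ?_
          have h : j + 1 + l - j = l + 1 := by omega
          rw [h]
          push_cast
          ring
        rw [e1]
        set N := T + 1 - (j + 1)
        have e2 : ∑ l ∈ range N, r ^ (l + 1) * (((l : ℝ) + 1) * (1 - β)⁻¹ + β / (1 - β) ^ 2)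
            = (1 - β)⁻¹ * ∑ l ∈ range N, ((l : ℝ) + 1) * r ^ (l + 1)
              + β / (1 - β) ^ 2 * (r * ∑ l ∈ range N, r ^ l) := by
          rw [mul_sum, mul_sum, mul_sum, ← sum_add_distrib]
          refine sum_congr rfl fun l _ => ?_
          rw [pow_succ]
          ring
        rw [e2]
        have h1 : ∑ l ∈ range N, ((l : ℝ) + 1) * r ^ (l + 1) ≤ r / (1 - r) ^ 2 := by
          have e3 : ∑ l ∈ range N, ((l : ℝ) + 1) * r ^ (l + 1)
              = ∑ k ∈ range (N + 1), (k : ℝ) * r ^ k := by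
            rw [Finset.sum_range_succ' (fun k => (k : ℝ) * r ^ k) N]
            push_cast
            simp
          rw [e3]
          exact geom_aux2 r hr0.le hr1 (N + 1)
        have h2 : ∑ l ∈ range N, r ^ l ≤ (1 - r)⁻¹ := geom_aux r hr0.le hr1 N
        have c1 : (0:ℝ) ≤ (1 - β)⁻¹ := by positivity
        have c2 : (0:ℝ) ≤ β / (1 - β) ^ 2 := by positivity
        have c3 : (0:ℝ) ≤ r := hr0.le
        nlinarith [mul_le_mul_of_nonneg_left h1 c1, mul_le_mul_of_nonneg_left h2 (mul_nonneg c2 c3)]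

set_option maxHeartbeats 1000000 in
/-- **Bounding the accumulated gradient-variance term by momentum norms.**
Let `f` be differentiable with `M`-Lipschitz gradient, `0 < β < γ < 1`, `η₀ > 0`,
`η_t = η₀/(2M)`, `b_t = 1 - β^t`, and suppose the iterates satisfy
`θ_{i+1} = θ_i - (η_i/b_i) • v_{i+1}` for `1 ≤ i ≤ T-1`. Then
`∑_{t=1}^T γ^{T-t} (2(1-β)η_t/b_t) ∑_{i=1}^t β^{t-i} ‖∇f(θ_t) - ∇f(θ_i)‖²
  ≤ (η₀³βγ/(2M(1-β)³(γ-β)²)) ∑_{i=1}^{T-1} γ^{T-i} ‖v_{i+1}‖²`. -/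
theorem momentum_gradient_variance_bound
    (D : ℕ) (f : EuclideanSpace ℝ (Fin D) → ℝ) (M β γ η₀ : ℝ)
    (hdiff : Differentiable ℝ f) (hM : 0 < M)
    (hlip : ∀ x y : EuclideanSpace ℝ (Fin D),
      ‖gradient f x - gradient f y‖ ≤ M * ‖x - y‖)
    (hβ0 : 0 < β) (hβγ : β < γ) (hγ1 : γ < 1) (hη₀ : 0 < η₀)
    (T : ℕ) (hT : 0 < T)
    (θ v : ℕ → EuclideanSpace ℝ (Fin D))
    (hiter : ∀ i : ℕ, 1 ≤ i → i ≤ T - 1 →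
      θ (i + 1) = θ i - ((η₀ / (2 * M)) / (1 - β ^ i)) • v (i + 1)) :
    ∑ t ∈ Icc 1 T, γ ^ (T - t) * (2 * (1 - β) * (η₀ / (2 * M)) / (1 - β ^ t)) *
        ∑ i ∈ Icc 1 t, β ^ (t - i) * ‖gradient f (θ t) - gradient f (θ i)‖ ^ 2
      ≤ (η₀ ^ 3 * β * γ / (2 * M * (1 - β) ^ 3 * (γ - β) ^ 2)) *
          ∑ i ∈ Icc 1 (T - 1), γ ^ (T - i) * ‖v (i + 1)‖ ^ 2 := by
  have hβ1 : β < 1 := hβγ.trans hγ1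
  have hγ0 : 0 < γ := hβ0.trans hβγ
  have h1β : 0 < 1 - β := by linarith
  set η : ℝ := η₀ / (2 * M) with hηdef
  have hη : 0 < η := by positivity
  set w : ℕ → ℝ := fun j => ‖v (j + 1)‖ ^ 2 with hwdef
  have hw0 : ∀ j, 0 ≤ w j := fun j => by positivity
  set C : ℝ := (M * (η / (1 - β))) ^ 2 with hCdef
  have hC0 : 0 ≤ C := by positivity
  -- bias factors
  have hbt : ∀ t : ℕ, 1 ≤ t → 0 < 1 - β ^ t ∧ 1 - β ≤ 1 - β ^ t := by
    intro t ht
    have : β ^ t ≤ β := by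
      calc β ^ t ≤ β ^ 1 := pow_le_pow_of_le_one hβ0.le hβ1.le ht
        _ = β := pow_one β
    constructor <;> linarith
  -- Step 1 : gradient variance by momentum norms
  have step1 : ∀ t i : ℕ, 1 ≤ i → i ≤ t → t ≤ T →
      ‖gradient f (θ t) - gradient f (θ i)‖ ^ 2
        ≤ C * (((t - i : ℕ) : ℝ) * ∑ j ∈ Ico i t, w j) := by
    intro t i hi hit htT
    have htel : ∑ l ∈ range (t - i), (θ (i + l + 1) - θ (i + l)) = θ t - θ i := by
      have h := Finset.sum_range_sub (fun l => θ (i + l)) (t - i)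
      simpa [Nat.add_sub_cancel' hit, add_assoc] using h
    have hstep : ∀ l ∈ range (t - i),
        ‖θ (i + l + 1) - θ (i + l)‖ ≤ η / (1 - β) * ‖v (i + l + 1)‖ := by
      intro l hl
      rw [mem_range] at hl
      have h1 : 1 ≤ i + l := by omega
      have h2 : i + l ≤ T - 1 := by omega
      have hb := hbt (i + l) h1
      rw [hiter (i + l) h1 h2]
      have e : θ (i + l) - (η / (1 - β ^ (i + l))) • v (i + l + 1) - θ (i + l)
          = -((η / (1 - β ^ (i + l))) • v (i + l + 1)) := by abel
      rw [e, norm_neg, norm_smul, Real.norm_eq_abs, abs_of_pos (div_pos hη hb.1)]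
      have : η / (1 - β ^ (i + l)) ≤ η / (1 - β) := by
        apply div_le_div_of_nonneg_left hη.le h1β hb.2
      exact mul_le_mul_of_nonneg_right this (norm_nonneg _)
    have hθ : ‖θ t - θ i‖ ≤ η / (1 - β) * ∑ l ∈ range (t - i), ‖v (i + l + 1)‖ := by
      rw [← htel]
      calc ‖∑ l ∈ range (t - i), (θ (i + l + 1) - θ (i + l))‖
          ≤ ∑ l ∈ range (t - i), ‖θ (i + l + 1) - θ (i + l)‖ := norm_sum_le _ _
        _ ≤ ∑ l ∈ range (t - i), η / (1 - β) * ‖v (i + l + 1)‖ := sum_le_sum hstep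
        _ = η / (1 - β) * ∑ l ∈ range (t - i), ‖v (i + l + 1)‖ := by rw [mul_sum]
    have hg : ‖gradient f (θ t) - gradient f (θ i)‖
        ≤ M * (η / (1 - β) * ∑ l ∈ range (t - i), ‖v (i + l + 1)‖) :=
      (hlip _ _).trans (mul_le_mul_of_nonneg_left hθ hM.le)
    calc ‖gradient f (θ t) - gradient f (θ i)‖ ^ 2
        ≤ (M * (η / (1 - β) * ∑ l ∈ range (t - i), ‖v (i + l + 1)‖)) ^ 2 := by
          apply pow_le_pow_left₀ (norm_nonneg _) hg
      _ = C * (∑ l ∈ range (t - i), ‖v (i + l + 1)‖) ^ 2 := by rw [hCdef]; ring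
      _ ≤ C * (((t - i : ℕ) : ℝ) * ∑ l ∈ range (t - i), ‖v (i + l + 1)‖ ^ 2) := by
          refine mul_le_mul_of_nonneg_left ?_ hC0
          have := sq_sum_le_card_mul_sum_sq (s := range (t - i))
            (f := fun l => ‖v (i + l + 1)‖)
          simpa [card_range] using this
      _ = C * (((t - i : ℕ) : ℝ) * ∑ j ∈ Ico i t, w j) := by
          have e : ∑ j ∈ Ico i t, w j = ∑ l ∈ range (t - i), ‖v (i + l + 1)‖ ^ 2 := by
            rw [sum_Ico_eq_sum_range]
          rw [e]
  -- Inner swap of (i,j) sums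
  have swap1 : ∀ t : ℕ, 1 ≤ t →
      ∑ i ∈ Icc 1 t, ((t - i : ℕ) : ℝ) * β ^ (t - i) * ∑ j ∈ Ico i t, w j
        = ∑ j ∈ Ico 1 t, (∑ i ∈ Icc 1 j, ((t - i : ℕ) : ℝ) * β ^ (t - i)) * w j := by
    intro t ht
    have h0 : ∑ i ∈ Icc 1 t, ((t - i : ℕ) : ℝ) * β ^ (t - i) * ∑ j ∈ Ico i t, w j
        = ∑ i ∈ Ico 1 t, ((t - i : ℕ) : ℝ) * β ^ (t - i) * ∑ j ∈ Ico i t, w j := by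
      rw [← Finset.Ico_add_one_right_eq_Icc, sum_Ico_succ_top ht]
      simp [Nat.sub_self]
    rw [h0]
    have h1 : ∑ i ∈ Ico 1 t, ((t - i : ℕ) : ℝ) * β ^ (t - i) * ∑ j ∈ Ico i t, w j
        = ∑ i ∈ Ico 1 t, ∑ j ∈ Ico i t, ((t - i : ℕ) : ℝ) * β ^ (t - i) * w j := by
      exact sum_congr rfl fun i _ => mul_sum _ _ _
    rw [h1, sum_Ico_Ico_comm 1 t (fun i j => ((t - i : ℕ) : ℝ) * β ^ (t - i) * w j)]
    refine sum_congr rfl fun j _ => ?_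
    rw [Finset.Ico_add_one_right_eq_Icc, sum_mul]
  -- Main chain
  have hKpos : (0:ℝ) < 1 - β / γ := by
    rw [sub_pos, div_lt_one hγ0]; exact hβγ
  calc ∑ t ∈ Icc 1 T, γ ^ (T - t) * (2 * (1 - β) * η / (1 - β ^ t)) *
        ∑ i ∈ Icc 1 t, β ^ (t - i) * ‖gradient f (θ t) - gradient f (θ i)‖ ^ 2
      ≤ ∑ t ∈ Icc 1 T, γ ^ (T - t) * (2 * η) *
          ∑ i ∈ Icc 1 t, β ^ (t - i) * (C * (((t - i : ℕ) : ℝ) * ∑ j ∈ Ico i t, w j)) := by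
        refine sum_le_sum fun t ht => ?_
        rw [mem_Icc] at ht
        have hb := hbt t ht.1
        have hcoef : γ ^ (T - t) * (2 * (1 - β) * η / (1 - β ^ t))
            ≤ γ ^ (T - t) * (2 * η) := by
          refine mul_le_mul_of_nonneg_left ?_ (by positivity)
          rw [div_le_iff₀ hb.1]
          nlinarith [hb.2]
        have hA : ∑ i ∈ Icc 1 t, β ^ (t - i) * ‖gradient f (θ t) - gradient f (θ i)‖ ^ 2
            ≤ ∑ i ∈ Icc 1 t, β ^ (t - i) * (C * (((t - i : ℕ) : ℝ) * ∑ j ∈ Ico i t, w j)) := by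
          refine sum_le_sum fun i hi => ?_
          rw [mem_Icc] at hi
          exact mul_le_mul_of_nonneg_left (step1 t i hi.1 hi.2 ht.2) (by positivity)
        have hA0 : 0 ≤ ∑ i ∈ Icc 1 t, β ^ (t - i) * ‖gradient f (θ t) - gradient f (θ i)‖ ^ 2 :=
          sum_nonneg fun i _ => by positivity
        exact mul_le_mul hcoef hA hA0 (by positivity)
    _ = (2 * η * C) * ∑ t ∈ Icc 1 T, γ ^ (T - t) *
          ∑ j ∈ Ico 1 t, (∑ i ∈ Icc 1 j, ((t - i : ℕ) : ℝ) * β ^ (t - i)) * w j := by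
        rw [mul_sum]
        refine sum_congr rfl fun t ht => ?_
        rw [mem_Icc] at ht
        rw [← swap1 t ht.1]
        rw [Finset.mul_sum, Finset.mul_sum, Finset.mul_sum]
        exact sum_congr rfl fun i _ => by ring
    _ = (2 * η * C) * ∑ j ∈ Ico 1 (T + 1), ∑ t ∈ Ico (j + 1) (T + 1),
          γ ^ (T - t) * ((∑ i ∈ Icc 1 j, ((t - i : ℕ) : ℝ) * β ^ (t - i)) * w j) := by
        congr 1
        rw [← Finset.Ico_add_one_right_eq_Icc]
        have e1 : ∀ t : ℕ, γ ^ (T - t) *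
              ∑ j ∈ Ico 1 t, (∑ i ∈ Icc 1 j, ((t - i : ℕ) : ℝ) * β ^ (t - i)) * w j
            = ∑ j ∈ Ico 1 t,
              γ ^ (T - t) * ((∑ i ∈ Icc 1 j, ((t - i : ℕ) : ℝ) * β ^ (t - i)) * w j) :=
          fun t => mul_sum _ _ _
        rw [sum_congr rfl fun t _ => e1 t]
        exact (sum_Ico_Ico_comm' 1 (T + 1)
          (fun j t => γ ^ (T - t) * ((∑ i ∈ Icc 1 j, ((t - i : ℕ) : ℝ) * β ^ (t - i)) * w j))).symm
    _ = (2 * η * C) * ∑ j ∈ Icc 1 T,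
          (∑ t ∈ Icc (j + 1) T, γ ^ (T - t) * ∑ i ∈ Icc 1 j, ((t - i : ℕ) : ℝ) * β ^ (t - i))
            * w j := by
        congr 1
        rw [Finset.Ico_add_one_right_eq_Icc]
        refine sum_congr rfl fun j _ => ?_
        rw [Finset.Ico_add_one_right_eq_Icc, sum_mul]
        exact sum_congr rfl fun t _ => by ring
    _ = (2 * η * C) * ∑ j ∈ Icc 1 (T - 1),
          (∑ t ∈ Icc (j + 1) T, γ ^ (T - t) * ∑ i ∈ Icc 1 j, ((t - i : ℕ) : ℝ) * β ^ (t - i))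
            * w j := by
        congr 1
        refine (sum_subset (Icc_subset_Icc_right (by omega : T - 1 ≤ T)) fun j hj hj' => ?_).symm
        rw [mem_Icc] at hj
        simp only [mem_Icc, not_and, not_le] at hj'
        have hjT : j = T := by omega
        have he : Icc (j + 1) T = ∅ := Icc_eq_empty (by omega)
        rw [he, sum_empty, zero_mul]
    _ ≤ (2 * η * C) * ∑ j ∈ Icc 1 (T - 1),
          (γ ^ (T - j) * ((1 - β)⁻¹ * (β / γ / (1 - β / γ) ^ 2)
            + β / (1 - β) ^ 2 * (β / γ * (1 - β / γ)⁻¹))) * w j := by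
        refine mul_le_mul_of_nonneg_left (sum_le_sum fun j hj => ?_) (by positivity)
        rw [mem_Icc] at hj
        exact mul_le_mul_of_nonneg_right (coef_bound β γ hβ0 hβγ hγ1 T j hj.1) (hw0 j)
    _ ≤ (η₀ ^ 3 * β * γ / (2 * M * (1 - β) ^ 3 * (γ - β) ^ 2)) *
          ∑ i ∈ Icc 1 (T - 1), γ ^ (T - i) * w i := by
        have e : ∑ j ∈ Icc 1 (T - 1),
              (γ ^ (T - j) * ((1 - β)⁻¹ * (β / γ / (1 - β / γ) ^ 2)
                + β / (1 - β) ^ 2 * (β / γ * (1 - β / γ)⁻¹))) * w j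
            = ((1 - β)⁻¹ * (β / γ / (1 - β / γ) ^ 2)
                + β / (1 - β) ^ 2 * (β / γ * (1 - β / γ)⁻¹))
              * ∑ j ∈ Icc 1 (T - 1), γ ^ (T - j) * w j := by
          rw [mul_sum]
          exact sum_congr rfl fun j _ => by ring
        rw [e, ← mul_assoc]
        refine mul_le_mul_of_nonneg_right ?_ (sum_nonneg fun j _ => by positivity)
        -- the constant inequality
        have hγβ : 0 < γ - β := by linarith
        have h1 : 1 - β / γ = (γ - β) / γ := by field_simp
        have key : γ - β ^ 2 ≤ 2 * γ * (1 - β) := by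
          nlinarith [mul_nonneg hγ0.le (sq_nonneg (1 - β)),
            mul_nonneg (sq_nonneg β) (by linarith : (0:ℝ) ≤ 1 - γ)]
        have lhs_eq : 2 * η * C * ((1 - β)⁻¹ * (β / γ / (1 - β / γ) ^ 2)
              + β / (1 - β) ^ 2 * (β / γ * (1 - β / γ)⁻¹))
            = η₀ ^ 3 * β * (γ - β ^ 2) / (4 * M * (1 - β) ^ 4 * (γ - β) ^ 2) := by
          rw [hCdef, hηdef, h1]
          field_simp
          ring
        rw [lhs_eq, div_le_div_iff₀ (by positivity) (by positivity)]
        nlinarith [mul_le_mul_of_nonneg_left key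
          (by positivity : (0:ℝ) ≤ η₀ ^ 3 * β * (2 * M * (1 - β) ^ 3 * (γ - β) ^ 2))]
end

section
/- Let V be a real inner product space, β ∈ (0, 1), t a positive integer, b_t = 1 − β^t. Let d_1, …, d_t ∈ V and e_1, …, e_t ∈ V be arbitrary vectors, and set v = (1 − β) ∑_{i=1}^t β^{t−i} (d_i + e_i). Then ‖b_t d_t − v‖² ≤ 2(1 − β) · ( b_t ∑_{i=1}^t β^{t−i} ‖d_t − d_i‖² + (1 − β) ‖∑_{i=1}^t β^{t−i} e_i‖² ). -/
open Finset

lemma norm_sum_smul_sq_le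
    (V : Type*) [NormedAddCommGroup V] [InnerProductSpace ℝ V]
    (s : Finset ℕ) (a : ℕ → ℝ) (ha : ∀ i ∈ s, 0 ≤ a i) (x : ℕ → V) :
    ‖∑ i ∈ s, a i • x i‖ ^ 2 ≤ (∑ i ∈ s, a i) * ∑ i ∈ s, a i * ‖x i‖ ^ 2 := by
  have h1 : ‖∑ i ∈ s, a i • x i‖ ≤ ∑ i ∈ s, a i * ‖x i‖ := by
    refine (norm_sum_le _ _).trans (le_of_eq ?_)
    refine Finset.sum_congr rfl fun i hi => ?_
    rw [norm_smul, Real.norm_eq_abs, abs_of_nonneg (ha i hi)]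
  have h2 : (∑ i ∈ s, a i * ‖x i‖) ^ 2
      ≤ (∑ i ∈ s, a i) * ∑ i ∈ s, a i * ‖x i‖ ^ 2 := by
    refine sum_sq_le_sum_mul_sum_of_sq_eq_mul s ha
      (fun i hi => mul_nonneg (ha i hi) (sq_nonneg _)) (fun i hi => by ring)
  calc ‖∑ i ∈ s, a i • x i‖ ^ 2 ≤ (∑ i ∈ s, a i * ‖x i‖) ^ 2 :=
        pow_le_pow_left₀ (norm_nonneg _) h1 2
    _ ≤ _ := h2

/-- **Splitting the momentum-gradient discrepancy.**
In a real inner product space, for `β ∈ (0,1)`, `t ≥ 1`, `b_t = 1 - β^t`, arbitrary vectors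
`d_1, …, d_t` and `e_1, …, e_t`, and `v = (1-β) ∑_{i=1}^t β^{t-i} (d_i + e_i)`,
`‖b_t d_t - v‖² ≤ 2(1-β) (b_t ∑_{i=1}^t β^{t-i} ‖d_t - d_i‖² + (1-β) ‖∑_{i=1}^t β^{t-i} e_i‖²)`. -/
theorem momentum_discrepancy_split
    (V : Type*) [NormedAddCommGroup V] [InnerProductSpace ℝ V]
    (β : ℝ) (hβ0 : 0 < β) (hβ1 : β < 1) (t : ℕ) (ht : 0 < t)
    (d e : ℕ → V) :
    ‖(1 - β ^ t) • d t - (1 - β) • ∑ i ∈ Icc 1 t, β ^ (t - i) • (d i + e i)‖ ^ 2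
      ≤ 2 * (1 - β) *
          ((1 - β ^ t) * ∑ i ∈ Icc 1 t, β ^ (t - i) * ‖d t - d i‖ ^ 2
            + (1 - β) * ‖∑ i ∈ Icc 1 t, β ^ (t - i) • e i‖ ^ 2) := by
  set S : ℝ := ∑ i ∈ Icc 1 t, β ^ (t - i) with hS
  have hβne : (1 : ℝ) - β ≠ 0 := by linarith
  have hSval : (1 - β) * S = 1 - β ^ t := by
    have hre : S = ∑ j ∈ range t, β ^ j := by
      rw [hS]
      refine Finset.sum_nbij' (fun i => t - i) (fun j => t - j) ?_ ?_ ?_ ?_ ?_ <;>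
        (intro i hi; simp only [Finset.mem_Icc, Finset.mem_range] at *) <;> omega
    rw [hre, geom_sum_eq (ne_of_lt hβ1)]
    have : β - 1 ≠ 0 := by linarith
    field_simp
    ring
  set X : V := ∑ i ∈ Icc 1 t, β ^ (t - i) • (d t - d i) with hX
  set Y : V := ∑ i ∈ Icc 1 t, β ^ (t - i) • e i with hY
  have hvec : (1 - β ^ t) • d t - (1 - β) • ∑ i ∈ Icc 1 t, β ^ (t - i) • (d i + e i)
      = (1 - β) • X - (1 - β) • Y := by
    rw [← hSval, mul_smul, ← smul_sub, ← smul_sub]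
    congr 1
    rw [hX, hY, hS, Finset.sum_smul, ← Finset.sum_sub_distrib, ← Finset.sum_sub_distrib]
    refine Finset.sum_congr rfl fun i hi => ?_
    rw [smul_sub, smul_add]
    abel
  rw [hvec]
  have key : ‖(1 - β) • X - (1 - β) • Y‖ ^ 2
      ≤ 2 * ((1 - β) ^ 2 * ‖X‖ ^ 2 + (1 - β) ^ 2 * ‖Y‖ ^ 2) := by
    have h := norm_sub_le ((1 - β) • X) ((1 - β) • Y)
    have hx : ‖(1 - β) • X‖ ^ 2 = (1 - β) ^ 2 * ‖X‖ ^ 2 := by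
      rw [norm_smul, Real.norm_eq_abs, mul_pow, sq_abs]
    have hy : ‖(1 - β) • Y‖ ^ 2 = (1 - β) ^ 2 * ‖Y‖ ^ 2 := by
      rw [norm_smul, Real.norm_eq_abs, mul_pow, sq_abs]
    nlinarith [sq_nonneg (‖(1 - β) • X‖ - ‖(1 - β) • Y‖), norm_nonneg ((1 - β) • X - (1 - β) • Y), norm_nonneg ((1 - β) • X), norm_nonneg ((1 - β) • Y)]
  have hXle : ‖X‖ ^ 2 ≤ S * ∑ i ∈ Icc 1 t, β ^ (t - i) * ‖d t - d i‖ ^ 2 := by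
    rw [hX, hS]
    exact norm_sum_smul_sq_le V _ _ (fun i _ => by positivity) _
  calc ‖(1 - β) • X - (1 - β) • Y‖ ^ 2
      ≤ 2 * ((1 - β) ^ 2 * ‖X‖ ^ 2 + (1 - β) ^ 2 * ‖Y‖ ^ 2) := key
    _ ≤ 2 * ((1 - β) ^ 2 * (S * ∑ i ∈ Icc 1 t, β ^ (t - i) * ‖d t - d i‖ ^ 2)
          + (1 - β) ^ 2 * ‖Y‖ ^ 2) := by gcongr
    _ = 2 * (1 - β) *
          ((1 - β ^ t) * ∑ i ∈ Icc 1 t, β ^ (t - i) * ‖d t - d i‖ ^ 2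
            + (1 - β) * ‖Y‖ ^ 2) := by rw [← hSval]; ring
end

section
/- Let γ ∈ (0, 1), β ∈ (0, 1), let T̂ = max{t ∈ ℕ, t ≥ 1 : γ^{t−1} ≥ (1 − β)/(1 − β^t)}, and let T be an integer with T > T̂. Then ∑_{t=1}^T γ^{T−t} (1 − β)/(1 − β^t) ≤ γ^{T−1} T̂ + (γ^{T̂−1} − γ^{T−1})/(1 − γ). -/
open Finset

private lemma cross_aux (c a b β : ℝ) (hc : 0 ≤ c) (hβ : β ≤ 1) (hb : b ≤ a) :
    c * ((1 - a) * (1 - β * b)) ≤ c * ((1 - β * a) * (1 - b)) := by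
  nlinarith [mul_nonneg (mul_nonneg hc (by linarith : (0:ℝ) ≤ 1 - β))
    (by linarith : (0:ℝ) ≤ a - b)]

private lemma cross (γ β : ℝ) (hγ0 : 0 < γ) (hβ0 : 0 < β) (hβ1 : β < 1)
    {j k : ℕ} (hjk : j ≤ k) :
    (γ ^ j * (1 - β ^ (j+1))) * (γ ^ (k+1) * (1 - β ^ (k+2)))
      ≤ (γ ^ (j+1) * (1 - β ^ (j+2))) * (γ ^ k * (1 - β ^ (k+1))) := by
  have hb : β ^ (k+1) ≤ β ^ (j+1) :=
    pow_le_pow_of_le_one hβ0.le hβ1.le (by omega)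
  have e1 : (γ ^ j * (1 - β ^ (j+1))) * (γ ^ (k+1) * (1 - β ^ (k+2)))
      = γ ^ (j+k+1) * ((1 - β ^ (j+1)) * (1 - β * β ^ (k+1))) := by
    rw [show k+2 = (k+1)+1 from rfl, pow_succ]
    ring
  have e2 : (γ ^ (j+1) * (1 - β ^ (j+2))) * (γ ^ k * (1 - β ^ (k+1)))
      = γ ^ (j+k+1) * ((1 - β * β ^ (j+1)) * (1 - β ^ (k+1))) := by
    rw [show j+2 = (j+1)+1 from rfl, pow_succ]
    ring
  rw [e1, e2]
  exact cross_aux _ _ _ _ (pow_nonneg hγ0.le _) hβ1.le hb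

private lemma key (γ β : ℝ) (hγ0 : 0 < γ) (hβ0 : 0 < β) (hβ1 : β < 1)
    {n m : ℕ} (hnm : n ≤ m) (hm : 1 - β ≤ γ ^ m * (1 - β ^ (m+1))) :
    1 - β ≤ γ ^ n * (1 - β ^ (n+1)) := by
  by_contra hcon
  push_neg at hcon
  set H : ℕ → ℝ := fun k => γ ^ k * (1 - β ^ (k+1)) with hH
  have hpos : ∀ k, 0 < H k := by
    intro k
    have : β ^ (k+1) < 1 := pow_lt_one₀ hβ0.le hβ1 (Nat.succ_ne_zero k)
    exact mul_pos (pow_pos hγ0 _) (by linarith)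
  have H0 : H 0 = 1 - β := by simp [hH]
  have hcon' : H n < 1 - β := hcon
  have hm' : 1 - β ≤ H m := hm
  have hex : ∃ i, i < n ∧ H (i+1) < H i := by
    by_contra h
    push_neg at h
    have hmono : ∀ k, k ≤ n → H 0 ≤ H k := by
      intro k hk
      induction k with
      | zero => exact le_rfl
      | succ k ih => exact le_trans (ih (by omega)) (h k (by omega))
    have := hmono n le_rfl
    rw [H0] at this
    linarith [hcon']
  obtain ⟨i, hin, hi⟩ := hex
  have hdec : ∀ k, i ≤ k → H (k+1) < H k := by
    intro k hk
    have hc : H i * H (k+1) ≤ H (i+1) * H k := cross γ β hγ0 hβ0 hβ1 hk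
    have h1 := hpos k
    have h2 := hpos i
    have h3 := hpos (k+1)
    nlinarith [hc, hi, h1, h2, h3]
  have hmn : H m ≤ H n := by
    have hstep : ∀ d, H (n + d) ≤ H n := by
      intro d
      induction d with
      | zero => exact le_rfl
      | succ d ih => exact le_trans (hdec (n+d) (by omega)).le ih
    have := hstep (m - n)
    rwa [Nat.add_sub_cancel' hnm] at this
  linarith [hm', hmn, hcon']

/-- **Splitting the momentum sum at the crossover step `T̂`.**
For `γ, β ∈ (0,1)`, let `T̂` be the maximum of the (nonempty, finite) set
`{t ≥ 1 : γ^{t-1} ≥ (1-β)/(1-β^t)}`. Then for any integer `T > T̂`,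
`∑_{t=1}^T γ^{T-t} (1-β)/(1-β^t) ≤ γ^{T-1} T̂ + (γ^{T̂-1} - γ^{T-1})/(1-γ)`. -/
theorem momentum_sum_split_at_crossover
    (γ β : ℝ) (hγ0 : 0 < γ) (hγ1 : γ < 1) (hβ0 : 0 < β) (hβ1 : β < 1)
    (That : ℕ) (hThat1 : 1 ≤ That)
    (hmem : (1 - β) / (1 - β ^ That) ≤ γ ^ (That - 1))
    (hmax : ∀ t : ℕ, 1 ≤ t → (1 - β) / (1 - β ^ t) ≤ γ ^ (t - 1) → t ≤ That)
    (T : ℕ) (hT : That < T) :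
    ∑ t ∈ Icc 1 T, γ ^ (T - t) * ((1 - β) / (1 - β ^ t))
      ≤ γ ^ (T - 1) * That + (γ ^ (That - 1) - γ ^ (T - 1)) / (1 - γ) := by
  have hβt : ∀ t : ℕ, 1 ≤ t → 0 < 1 - β ^ t := by
    intro t ht
    have : β ^ t < 1 := pow_lt_one₀ hβ0.le hβ1 (by omega)
    linarith
  -- part 1 : for 1 ≤ t ≤ That, f t ≤ γ^(t-1)
  have part1 : ∀ t : ℕ, 1 ≤ t → t ≤ That → (1 - β) / (1 - β ^ t) ≤ γ ^ (t - 1) := by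
    intro t ht htT
    rw [div_le_iff₀ (hβt t ht)]
    have hmem' : 1 - β ≤ γ ^ (That - 1) * (1 - β ^ ((That - 1) + 1)) := by
      rw [show (That - 1) + 1 = That by omega]
      rw [div_le_iff₀ (hβt That hThat1)] at hmem
      linarith [hmem]
    have := key γ β hγ0 hβ0 hβ1 (show t - 1 ≤ That - 1 by omega) hmem'
    rw [show (t - 1) + 1 = t by omega] at this
    linarith
  -- part 2 : for t > That, f t ≤ γ^(That-1)
  have part2 : ∀ t : ℕ, That < t → (1 - β) / (1 - β ^ t) ≤ γ ^ (That - 1) := by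
    intro t ht
    have h1 : (1 - β) / (1 - β ^ t) ≤ (1 - β) / (1 - β ^ That) := by
      apply div_le_div_of_nonneg_left (by linarith) (hβt That hThat1)
      have : β ^ t ≤ β ^ That := pow_le_pow_of_le_one hβ0.le hβ1.le (by omega)
      linarith
    linarith [hmem]
  -- split the sum
  have hsplit : ∑ t ∈ Icc 1 T, γ ^ (T - t) * ((1 - β) / (1 - β ^ t))
      = (∑ t ∈ Ioc 0 That, γ ^ (T - t) * ((1 - β) / (1 - β ^ t)))
        + ∑ t ∈ Ioc That T, γ ^ (T - t) * ((1 - β) / (1 - β ^ t)) := by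
    rw [show (1:ℕ) = 0 + 1 from rfl, Finset.Icc_add_one_left_eq_Ioc,
      Finset.sum_Ioc_consecutive _ (Nat.zero_le That) hT.le]
  rw [hsplit]
  -- bound for the first sum
  have hfnonneg : ∀ t : ℕ, 1 ≤ t → 0 ≤ (1 - β) / (1 - β ^ t) := by
    intro t ht
    exact div_nonneg (by linarith) (hβt t ht).le
  have hb1 : ∑ t ∈ Ioc 0 That, γ ^ (T - t) * ((1 - β) / (1 - β ^ t))
      ≤ γ ^ (T - 1) * That := by
    have : ∑ t ∈ Ioc 0 That, γ ^ (T - t) * ((1 - β) / (1 - β ^ t))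
        ≤ ∑ t ∈ Ioc 0 That, γ ^ (T - 1) := by
      apply Finset.sum_le_sum
      intro t htm
      rw [Finset.mem_Ioc] at htm
      have h1 : γ ^ (T - t) * ((1 - β) / (1 - β ^ t)) ≤ γ ^ (T - t) * γ ^ (t - 1) :=
        mul_le_mul_of_nonneg_left (part1 t htm.1 htm.2) (pow_nonneg hγ0.le _)
      have h2 : γ ^ (T - t) * γ ^ (t - 1) = γ ^ (T - 1) := by
        rw [← pow_add]
        congr 1
        omega
      linarith [h1, h2 ▸ h1]
    rw [Finset.sum_const, Nat.card_Ioc, Nat.sub_zero, nsmul_eq_mul] at this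
    linarith [this]
  -- bound for the second sum
  have hb2 : ∑ t ∈ Ioc That T, γ ^ (T - t) * ((1 - β) / (1 - β ^ t))
      ≤ (γ ^ (That - 1) - γ ^ (T - 1)) / (1 - γ) := by
    have step1 : ∑ t ∈ Ioc That T, γ ^ (T - t) * ((1 - β) / (1 - β ^ t))
        ≤ ∑ t ∈ Ioc That T, γ ^ (T - t) * γ ^ (That - 1) := by
      apply Finset.sum_le_sum
      intro t htm
      rw [Finset.mem_Ioc] at htm
      exact mul_le_mul_of_nonneg_left (part2 t htm.1) (pow_nonneg hγ0.le _)
    have step2 : ∑ t ∈ Ioc That T, γ ^ (T - t) * γ ^ (That - 1)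
        = (∑ s ∈ Finset.range (T - That), γ ^ s) * γ ^ (That - 1) := by
      rw [← Finset.sum_mul]
      congr 1
      apply Finset.sum_nbij' (fun t => T - t) (fun s => T - s)
      · intro a ha
        rw [Finset.mem_Ioc] at ha
        rw [Finset.mem_range]
        omega
      · intro a ha
        rw [Finset.mem_range] at ha
        rw [Finset.mem_Ioc]
        omega
      · intro a ha
        rw [Finset.mem_Ioc] at ha
        omega
      · intro a ha
        rw [Finset.mem_range] at ha
        omega
      · intro a ha
        rfl
    have step3 : (∑ s ∈ Finset.range (T - That), γ ^ s) * γ ^ (That - 1)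
        = (γ ^ (That - 1) - γ ^ (T - 1)) / (1 - γ) := by
      rw [geom_sum_eq (by linarith : γ ≠ 1)]
      have hne : γ - 1 ≠ 0 := by linarith
      have hne2 : (1:ℝ) - γ ≠ 0 := by linarith
      have hpow : γ ^ (T - That) * γ ^ (That - 1) = γ ^ (T - 1) := by
        rw [← pow_add]
        congr 1
        omega
      field_simp
      linear_combination (1 - γ) * hpow
    calc ∑ t ∈ Ioc That T, γ ^ (T - t) * ((1 - β) / (1 - β ^ t))
        ≤ ∑ t ∈ Ioc That T, γ ^ (T - t) * γ ^ (That - 1) := step1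
      _ = (γ ^ (That - 1) - γ ^ (T - 1)) / (1 - γ) := by rw [step2, step3]
  linarith [hb1, hb2]
end

section
/- Let E = EuclideanSpace ℝ (Fin D), let f : E → ℝ be differentiable, M-smooth, satisfy the PL condition with constant μ > 0, 0 < μ ≤ M, infimum f*, and set γ = 1 − μ/M. Let G, σ_g > 0, let n be a positive integer (batch size), and let σ_1, …, σ_T > 0. On a probability space let ξ_1, …, ξ_T and ν_1, …, ν_T be E-valued random vectors such that for each t, the pair (ξ_t, ν_t) is independent of ((ξ_1, ν_1), …, (ξ_{t−1}, ν_{t−1})), ξ_t and ν_t are independent and mean zero with E‖ξ_t‖² ≤ D and E‖ν_t‖² ≤ D. Define θ_1 ∈ E deterministic and θ_{t+1} = θ_t − (1/M)(∇f(θ_t) + (σ_g/n) ξ_t + (G σ_t/n) ν_t). Then E[f(θ_{T+1})] − f* ≤ γ^T (f(θ_1) − f*) + (D σ_g²/(2 μ n²)) + (D G²/(2 M n²)) ∑_{t=1}^T γ^{T−t} σ_t². -/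
open scoped RealInnerProductSpace
open MeasureTheory ProbabilityTheory Finset

/-!
With step size `1/M` the cross term `⟪∇f(θ), w⟫` produced by a noise vector `w` cancels
exactly in the `M`-smoothness bound, which leaves
`f(θ - (∇f(θ) + w)/M) ≤ f(θ) - ‖∇f(θ)‖²/(2M) + ‖w‖²/(2M)`. Combined with the PL inequality this
gives `f(θ_{t+1}) - f* ≤ γ (f(θ_t) - f*) + ‖w_t‖²/(2M)` pointwise. Independence kills the cross
term of `w_t = (σ_g/n) ξ_t + (Gσ_t/n) ν_t` in expectation, so `E‖w_t‖² ≤ D(σ_g² + G²σ_t²)/n²`.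
Unrolling the expected recursion and bounding `∑ γ^{T-t} ≤ 1/(1-γ) = M/μ` for the constant part
gives the bound.
-/

section Descent

variable {E : Type*} [NormedAddCommGroup E] [InnerProductSpace ℝ E]

lemma smooth_step_le {f : E → ℝ} {M : ℝ} (hM : 0 < M) {x g : E}
    (hsmooth : ∀ y, f y ≤ f x + ⟪g, y - x⟫ + M / 2 * ‖y - x‖ ^ 2) (w : E) :
    f (x - (1 / M) • (g + w)) ≤ f x - ‖g‖ ^ 2 / (2 * M) + ‖w‖ ^ 2 / (2 * M) := by
  have h := hsmooth (x - (1 / M) • (g + w))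
  rw [sub_sub_cancel_left, inner_neg_right, norm_neg, real_inner_smul_right, norm_smul,
    inner_add_right, real_inner_self_eq_norm_sq, mul_pow, norm_add_sq_real,
    Real.norm_of_nonneg (by positivity)] at h
  convert h using 1
  field_simp
  ring

lemma pl_step_sub_le {f : E → ℝ} {M μ fstar : ℝ} (hM : 0 < M) {x g : E}
    (hsmooth : ∀ y, f y ≤ f x + ⟪g, y - x⟫ + M / 2 * ‖y - x‖ ^ 2)
    (hPL : 2 * μ * (f x - fstar) ≤ ‖g‖ ^ 2) (w : E) :
    f (x - (1 / M) • (g + w)) - fstar ≤ (1 - μ / M) * (f x - fstar) + ‖w‖ ^ 2 / (2 * M) := by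
  have h := smooth_step_le hM hsmooth w
  have hPL' : μ / M * (f x - fstar) ≤ ‖g‖ ^ 2 / (2 * M) := by
    rw [div_mul_eq_mul_div, div_le_div_iff₀ hM (by positivity)]
    nlinarith
  linarith

lemma integral_pl_step_sub_le {Ω : Type*} [MeasurableSpace Ω] {P : Measure Ω}
    [IsProbabilityMeasure P] [CompleteSpace E]
    {f : E → ℝ} {M μ fstar : ℝ} (hM : 0 < M)
    (hsmooth : ∀ x y : E, f y ≤ f x + ⟪gradient f x, y - x⟫ + M / 2 * ‖y - x‖ ^ 2)
    (hPL : ∀ x : E, ‖gradient f x‖ ^ 2 ≥ 2 * μ * (f x - fstar))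
    {X w : Ω → E} (hfX : Integrable (fun ω => f (X ω)) P)
    (hfX' : Integrable (fun ω => f (X ω - (1 / M) • (gradient f (X ω) + w ω))) P)
    (hw : Integrable (fun ω => ‖w ω‖ ^ 2) P) :
    ∫ ω, f (X ω - (1 / M) • (gradient f (X ω) + w ω)) ∂P - fstar
      ≤ (1 - μ / M) * (∫ ω, f (X ω) ∂P - fstar) + (∫ ω, ‖w ω‖ ^ 2 ∂P) / (2 * M) := by
  have hgap : Integrable (fun ω => (1 - μ / M) * (f (X ω) - fstar)) P :=
    (hfX.sub (integrable_const fstar)).const_mul _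
  have h : ∫ ω, (f (X ω - (1 / M) • (gradient f (X ω) + w ω)) - fstar) ∂P
      ≤ ∫ ω, ((1 - μ / M) * (f (X ω) - fstar) + ‖w ω‖ ^ 2 / (2 * M)) ∂P :=
    integral_mono (hfX'.sub (integrable_const fstar)) (hgap.add (hw.div_const _))
      fun ω => pl_step_sub_le hM (hsmooth (X ω)) (hPL (X ω)) (w ω)
  rw [integral_sub hfX' (integrable_const fstar), integral_add hgap (hw.div_const _),
    integral_const_mul, integral_sub hfX (integrable_const fstar), integral_div,
    integral_const, probReal_univ, one_smul] at h
  exact h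

end Descent

section Noise

lemma norm_smul_add_smul_sq {E : Type*} [NormedAddCommGroup E] [InnerProductSpace ℝ E]
    (a b : ℝ) (x y : E) :
    ‖a • x + b • y‖ ^ 2 = a ^ 2 * ‖x‖ ^ 2 + 2 * (a * b) * ⟪x, y⟫ + b ^ 2 * ‖y‖ ^ 2 := by
  rw [norm_add_sq_real, norm_smul, norm_smul, real_inner_smul_left, real_inner_smul_right,
    Real.norm_eq_abs, Real.norm_eq_abs, mul_pow, mul_pow, sq_abs, sq_abs]
  ring

variable {Ω E : Type*} [MeasurableSpace Ω] {P : Measure Ω}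
  [NormedAddCommGroup E] [InnerProductSpace ℝ E] [MeasurableSpace E] [BorelSpace E]
  {X Y : Ω → E} (hXY : IndepFun X Y P) (hX : Integrable X P) (hY : Integrable Y P)
  (hX2 : Integrable (fun ω => ‖X ω‖ ^ 2) P) (hY2 : Integrable (fun ω => ‖Y ω‖ ^ 2) P)
include hXY hX hY hX2 hY2

lemma integrable_norm_smul_add_smul_sq_of_indepFun (a b : ℝ) :
    Integrable (fun ω => ‖a • X ω + b • Y ω‖ ^ 2) P := by
  simp_rw [norm_smul_add_smul_sq]
  exact ((hX2.const_mul _).add ((hXY.integrable_bilin hX hY (innerSL ℝ)).const_mul _)).add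
    (hY2.const_mul _)

lemma integral_norm_smul_add_smul_sq_of_indepFun [CompleteSpace E] (hX0 : P[X] = 0) (a b : ℝ) :
    ∫ ω, ‖a • X ω + b • Y ω‖ ^ 2 ∂P = a ^ 2 * ∫ ω, ‖X ω‖ ^ 2 ∂P + b ^ 2 * ∫ ω, ‖Y ω‖ ^ 2 ∂P := by
  have hcross : Integrable (fun ω => 2 * (a * b) * ⟪X ω, Y ω⟫) P :=
    (hXY.integrable_bilin hX hY (innerSL ℝ)).const_mul _
  have hcross0 : ∫ ω, ⟪X ω, Y ω⟫ ∂P = 0 :=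
    (hXY.integral_bilin hX hY (innerSL ℝ)).trans (by simp [hX0])
  have hfirst : Integrable (fun ω => a ^ 2 * ‖X ω‖ ^ 2 + 2 * (a * b) * ⟪X ω, Y ω⟫) P :=
    (hX2.const_mul _).add hcross
  simp_rw [norm_smul_add_smul_sq]
  rw [integral_add hfirst (hY2.const_mul _), integral_add (hX2.const_mul _) hcross,
    integral_const_mul, integral_const_mul, integral_const_mul, hcross0]
  ring

end Noise

lemma integral_sgd_step_sub_le {Ω E : Type*} [MeasurableSpace Ω] {P : Measure Ω}
    [IsProbabilityMeasure P] [NormedAddCommGroup E] [InnerProductSpace ℝ E] [CompleteSpace E]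
    [MeasurableSpace E] [BorelSpace E]
    {f : E → ℝ} {M μ fstar : ℝ} (hM : 0 < M)
    (hsmooth : ∀ x y : E, f y ≤ f x + ⟪gradient f x, y - x⟫ + M / 2 * ‖y - x‖ ^ 2)
    (hPL : ∀ x : E, ‖gradient f x‖ ^ 2 ≥ 2 * μ * (f x - fstar))
    {X ξ ν : Ω → E} {a b V : ℝ} (hξν : IndepFun ξ ν P) (hξ : Integrable ξ P)
    (hν : Integrable ν P) (hξ0 : P[ξ] = 0)
    (hξ2 : Integrable (fun ω => ‖ξ ω‖ ^ 2) P) (hν2 : Integrable (fun ω => ‖ν ω‖ ^ 2) P)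
    (hξV : ∫ ω, ‖ξ ω‖ ^ 2 ∂P ≤ V) (hνV : ∫ ω, ‖ν ω‖ ^ 2 ∂P ≤ V)
    (hfX : Integrable (fun ω => f (X ω)) P)
    (hfX' : Integrable (fun ω => f (X ω - (1 / M) • (gradient f (X ω) + a • ξ ω + b • ν ω))) P) :
    ∫ ω, f (X ω - (1 / M) • (gradient f (X ω) + a • ξ ω + b • ν ω)) ∂P - fstar
      ≤ (1 - μ / M) * (∫ ω, f (X ω) ∂P - fstar) + (a ^ 2 * V + b ^ 2 * V) / (2 * M) := by
  simp only [add_assoc] at hfX' ⊢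
  calc _ ≤ (1 - μ / M) * (∫ ω, f (X ω) ∂P - fstar)
        + (∫ ω, ‖a • ξ ω + b • ν ω‖ ^ 2 ∂P) / (2 * M) :=
        integral_pl_step_sub_le hM hsmooth hPL hfX hfX'
          (integrable_norm_smul_add_smul_sq_of_indepFun hξν hξ hν hξ2 hν2 a b)
    _ ≤ _ := by
      rw [integral_norm_smul_add_smul_sq_of_indepFun hξν hξ hν hξ2 hν2 hξ0]
      gcongr

lemma le_pow_mul_add_sum_of_le_mul_add {e c : ℕ → ℝ} {γ : ℝ} (hγ : 0 ≤ γ)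
    (h : ∀ t, 1 ≤ t → e (t + 1) ≤ γ * e t + c t) (T : ℕ) :
    e (T + 1) ≤ γ ^ T * e 1 + ∑ t ∈ Icc 1 T, γ ^ (T - t) * c t := by
  induction T with
  | zero => simp
  | succ T ih =>
    have hsum : ∑ t ∈ Icc 1 (T + 1), γ ^ (T + 1 - t) * c t
        = γ * ∑ t ∈ Icc 1 T, γ ^ (T - t) * c t + c (T + 1) := by
      rw [sum_Icc_succ_top (Nat.le_add_left 1 T), mul_sum, Nat.sub_self, pow_zero, one_mul]
      congr 1
      refine sum_congr rfl fun t ht => ?_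
      rw [Nat.sub_add_comm (mem_Icc.mp ht).2, pow_succ]
      ring
    calc e (T + 1 + 1) ≤ γ * e (T + 1) + c (T + 1) := h (T + 1) (Nat.le_add_left 1 T)
      _ ≤ γ * (γ ^ T * e 1 + ∑ t ∈ Icc 1 T, γ ^ (T - t) * c t) + c (T + 1) := by gcongr
      _ = γ ^ (T + 1) * e 1 + ∑ t ∈ Icc 1 (T + 1), γ ^ (T + 1 - t) * c t := by
        rw [hsum, pow_succ]
        ring

lemma sum_Icc_pow_sub_le {γ : ℝ} (h0 : 0 ≤ γ) (h1 : γ < 1) (T : ℕ) :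
    ∑ t ∈ Icc 1 T, γ ^ (T - t) ≤ 1 / (1 - γ) := by
  rw [← Ico_add_one_right_eq_Icc, sum_Ico_reflect _ _ le_rfl, Nat.sub_self, Nat.add_sub_cancel]
  simpa using geom_sum_Ico_le_of_lt_one (m := 0) (n := T) h0 h1

theorem private_sgd_excess_risk_general
    (D T : ℕ)
    (f : EuclideanSpace ℝ (Fin D) → ℝ) (M μ fstar G σg : ℝ) (n : ℕ)
    (hM : 0 < M) (hμ : 0 < μ) (hμM : μ ≤ M)
    (hsmooth : ∀ x y : EuclideanSpace ℝ (Fin D),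
      f y ≤ f x + ⟪gradient f x, y - x⟫ + M / 2 * ‖y - x‖ ^ 2)
    (hPL : ∀ θ : EuclideanSpace ℝ (Fin D), ‖gradient f θ‖ ^ 2 ≥ 2 * μ * (f θ - fstar))
    (σ : ℕ → ℝ)
    (Ω : Type) [MeasureSpace Ω] [IsProbabilityMeasure (volume : Measure Ω)]
    (ξ ν : ℕ → Ω → EuclideanSpace ℝ (Fin D))
    (hintξ : ∀ t, Integrable (ξ t)) (hintν : ∀ t, Integrable (ν t))
    (hmeanξ : ∀ t, ∫ ω, ξ t ω = 0)
    (hmoment2intξ : ∀ t, Integrable (fun ω => ‖ξ t ω‖ ^ 2))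
    (hmoment2intν : ∀ t, Integrable (fun ω => ‖ν t ω‖ ^ 2))
    (hmoment2ξ : ∀ t, ∫ ω, ‖ξ t ω‖ ^ 2 ≤ (D : ℝ))
    (hmoment2ν : ∀ t, ∫ ω, ‖ν t ω‖ ^ 2 ≤ (D : ℝ))
    (hindepξν : ∀ t, IndepFun (ξ t) (ν t))
    (θ₁ : EuclideanSpace ℝ (Fin D))
    (θ : ℕ → Ω → EuclideanSpace ℝ (Fin D))
    (hθ₁ : ∀ ω, θ 1 ω = θ₁)
    (hiter : ∀ t ω, 1 ≤ t →
      θ (t + 1) ω = θ t ω - (1 / M) •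
        (gradient f (θ t ω) + (σg / (n : ℝ)) • ξ t ω + (G * σ t / (n : ℝ)) • ν t ω))
    (hfint : ∀ t, Integrable (fun ω => f (θ t ω))) :
    (∫ ω, f (θ (T + 1) ω)) - fstar ≤
      (1 - μ / M) ^ T * (f θ₁ - fstar)
        + (D : ℝ) * σg ^ 2 / (2 * μ * (n : ℝ) ^ 2)
        + ((D : ℝ) * G ^ 2 / (2 * M * (n : ℝ) ^ 2)) *
            ∑ t ∈ Icc 1 T, (1 - μ / M) ^ (T - t) * σ t ^ 2 := by
  set γ := 1 - μ / M with hγ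
  have hγ0 : 0 ≤ γ := sub_nonneg.mpr ((div_le_one hM).mpr hμM)
  have hγ1 : γ < 1 := sub_lt_self 1 (div_pos hμ hM)
  have hstep : ∀ t, 1 ≤ t → (∫ ω, f (θ (t + 1) ω)) - fstar ≤
      γ * ((∫ ω, f (θ t ω)) - fstar) + ((σg / n) ^ 2 * D + (G * σ t / n) ^ 2 * D) / (2 * M) := by
    intro t ht
    have hfnext := hfint (t + 1)
    simp only [hiter t _ ht] at hfnext ⊢
    exact integral_sgd_step_sub_le hM hsmooth hPL (hindepξν t) (hintξ t) (hintν t) (hmeanξ t)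
      (hmoment2intξ t) (hmoment2intν t) (hmoment2ξ t) (hmoment2ν t) (hfint t) hfnext
  have hunroll := le_pow_mul_add_sum_of_le_mul_add (e := fun t => (∫ ω, f (θ t ω)) - fstar)
    (c := fun t => ((σg / n) ^ 2 * D + (G * σ t / n) ^ 2 * D) / (2 * M)) hγ0 hstep T
  have hstart : ∫ ω, f (θ 1 ω) = f θ₁ := by simp [hθ₁]
  have hsplit :
      ∑ t ∈ Icc 1 T, γ ^ (T - t) * (((σg / n) ^ 2 * D + (G * σ t / n) ^ 2 * D) / (2 * M))
      = D * σg ^ 2 / (2 * M * n ^ 2) * ∑ t ∈ Icc 1 T, γ ^ (T - t)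
        + D * G ^ 2 / (2 * M * n ^ 2) * ∑ t ∈ Icc 1 T, γ ^ (T - t) * σ t ^ 2 := by
    rw [mul_sum, mul_sum, ← sum_add_distrib]
    exact sum_congr rfl fun t _ => by ring
  have hgeom := mul_le_mul_of_nonneg_left (sum_Icc_pow_sub_le hγ0 hγ1 T)
    (by positivity : 0 ≤ (D : ℝ) * σg ^ 2 / (2 * M * n ^ 2))
  have hconst : (D : ℝ) * σg ^ 2 / (2 * M * n ^ 2) * (1 / (1 - γ))
      = D * σg ^ 2 / (2 * μ * n ^ 2) := by
    rw [hγ, sub_sub_cancel]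
    field_simp
  simp only [hstart, hsplit] at hunroll
  linarith

/-- **Utility bound for Private Stochastic Gradient Descent under the PL condition.**
With step size `1/M`, stochastic gradient `∇f(θ_t) + (σ_g/n) ξ_t` and privacy noise
`(G σ_t/n) ν_t` (both mean zero with second moments at most `D`, `ξ_t ⟂ ν_t`, and the pair
independent of the past), `γ = 1 - μ/M`, the final expected excess risk satisfies
`E[f(θ_{T+1})] - f* ≤ γ^T (f(θ₁) - f*) + D σ_g²/(2 μ n²)
  + (D G²/(2 M n²)) ∑_{t=1}^T γ^{T-t} σ_t²`. -/
theorem private_sgd_excess_risk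
    (D T : ℕ) (hT : 0 < T)
    (f : EuclideanSpace ℝ (Fin D) → ℝ) (M μ fstar G σg : ℝ) (n : ℕ)
    (hdiff : Differentiable ℝ f) (hM : 0 < M) (hμ : 0 < μ) (hμM : μ ≤ M)
    (hsmooth : ∀ x y : EuclideanSpace ℝ (Fin D),
      f y ≤ f x + ⟪gradient f x, y - x⟫ + M / 2 * ‖y - x‖ ^ 2)
    (hfstar : IsGLB (Set.range f) fstar)
    (hPL : ∀ θ : EuclideanSpace ℝ (Fin D), ‖gradient f θ‖ ^ 2 ≥ 2 * μ * (f θ - fstar))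
    (hG : 0 < G) (hσg : 0 < σg) (hn : 0 < n)
    (σ : ℕ → ℝ) (hσ : ∀ t, 0 < σ t)
    (Ω : Type) [MeasureSpace Ω] [IsProbabilityMeasure (volume : Measure Ω)]
    (ξ ν : ℕ → Ω → EuclideanSpace ℝ (Fin D))
    (hmeasξ : ∀ t, Measurable (ξ t)) (hmeasν : ∀ t, Measurable (ν t))
    (hintξ : ∀ t, Integrable (ξ t)) (hintν : ∀ t, Integrable (ν t))
    (hmeanξ : ∀ t, ∫ ω, ξ t ω = 0) (hmeanν : ∀ t, ∫ ω, ν t ω = 0)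
    (hmoment2intξ : ∀ t, Integrable (fun ω => ‖ξ t ω‖ ^ 2))
    (hmoment2intν : ∀ t, Integrable (fun ω => ‖ν t ω‖ ^ 2))
    (hmoment2ξ : ∀ t, ∫ ω, ‖ξ t ω‖ ^ 2 ≤ (D : ℝ))
    (hmoment2ν : ∀ t, ∫ ω, ‖ν t ω‖ ^ 2 ≤ (D : ℝ))
    (hindepξν : ∀ t, IndepFun (ξ t) (ν t))
    (hindeppast : ∀ t, IndepFun (fun ω => (ξ t ω, ν t ω))
      (fun ω (i : Fin (t - 1)) => (ξ (i + 1) ω, ν (i + 1) ω)))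
    (θ₁ : EuclideanSpace ℝ (Fin D))
    (θ : ℕ → Ω → EuclideanSpace ℝ (Fin D))
    (hθ₁ : ∀ ω, θ 1 ω = θ₁)
    (hiter : ∀ t ω, 1 ≤ t →
      θ (t + 1) ω = θ t ω - (1 / M) •
        (gradient f (θ t ω) + (σg / (n : ℝ)) • ξ t ω + (G * σ t / (n : ℝ)) • ν t ω))
    (hfint : ∀ t, Integrable (fun ω => f (θ t ω))) :
    (∫ ω, f (θ (T + 1) ω)) - fstar ≤
      (1 - μ / M) ^ T * (f θ₁ - fstar)
        + (D : ℝ) * σg ^ 2 / (2 * μ * (n : ℝ) ^ 2)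
        + ((D : ℝ) * G ^ 2 / (2 * M * (n : ℝ) ^ 2)) *
            ∑ t ∈ Icc 1 T, (1 - μ / M) ^ (T - t) * σ t ^ 2 :=
  private_sgd_excess_risk_general D T f M μ fstar G σg n hM hμ hμM hsmooth hPL σ Ω ξ ν hintξ hintν
    hmeanξ hmoment2intξ hmoment2intν hmoment2ξ hmoment2ν hindepξν θ₁ θ hθ₁ hiter hfint
end
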